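/- arXiv:1604.01699 — 5 statements merged into one kernel-verified Lean document; each statement's English description precedes it below -/
import Mathlib

section
/- For all real constants C > 0 and M > 0 there exists ε > 0 (depending only on C and M) with the following property: for every twice continuously differentiable function x : [0, ε] → ℝ satisfying x(0) = 0, |x'(0)| ≤ M, and |x''(t)| ≤ C·(x(t)² + |x'(t)|) for all t ∈ [0, ε], one has |x'(t) − x'(0)| ≤ |x'(0)|/2 for all t ∈ [0, ε]; in particular (1/2)·|x'(0)| ≤ |x'(t)| ≤ (3/2)·|x'(0)| on [0, ε]. -/
open Set Real MeasureTheory Filter Topology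

/-- For all real constants `C > 0` and `M > 0` there exists `ε > 0` such that: for every twice
continuously differentiable function `x : [0, ε] → ℝ` (with first derivative `x'` and second
derivative `x''` on `[0, ε]`) satisfying `x 0 = 0`, `|x' 0| ≤ M`, and
`|x'' t| ≤ C * (x t ^ 2 + |x' t|)` on `[0, ε]`, one has `|x' t − x' 0| ≤ |x' 0| / 2` on `[0, ε]`;
in particular `(1/2) * |x' 0| ≤ |x' t| ≤ (3/2) * |x' 0|` on `[0, ε]`. -/
theorem stmt0 (C M : ℝ) (hC : 0 < C) (hM : 0 < M) :
    ∃ ε > (0 : ℝ), ∀ x x' x'' : ℝ → ℝ,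
      (∀ t ∈ Set.Icc (0 : ℝ) ε, HasDerivWithinAt x (x' t) (Set.Icc (0 : ℝ) ε) t) →
      (∀ t ∈ Set.Icc (0 : ℝ) ε, HasDerivWithinAt x' (x'' t) (Set.Icc (0 : ℝ) ε) t) →
      ContinuousOn x'' (Set.Icc (0 : ℝ) ε) →
      x 0 = 0 → |x' 0| ≤ M →
      (∀ t ∈ Set.Icc (0 : ℝ) ε, |x'' t| ≤ C * ((x t) ^ 2 + |x' t|)) →
      ∀ t ∈ Set.Icc (0 : ℝ) ε,
        |x' t - x' 0| ≤ |x' 0| / 2 ∧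
        (1 / 2) * |x' 0| ≤ |x' t| ∧ |x' t| ≤ (3 / 2) * |x' 0| := by
  refine ⟨min 1 (min (1/(2*M)) (1/(6*C))), by positivity, ?_⟩
  set ε := min 1 (min (1/(2*M)) (1/(6*C))) with hεdef
  have hε0 : 0 < ε := by positivity
  have hε1 : ε ≤ 1 := min_le_left _ _
  have hεM : ε ≤ 1/(2*M) := le_trans (min_le_right _ _) (min_le_left _ _)
  have hεC : ε ≤ 1/(6*C) := le_trans (min_le_right _ _) (min_le_right _ _)
  intro x x' x'' hx hx' hx''c hx0 hAM hbound
  set A := |x' 0| with hAdef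
  have hA0 : 0 ≤ A := abs_nonneg _
  have hxc : ContinuousOn x (Icc 0 ε) := fun t ht => (hx t ht).continuousWithinAt
  have hx'c : ContinuousOn x' (Icc 0 ε) := fun t ht => (hx' t ht).continuousWithinAt
  have habs : ContinuousOn (fun s => |x'' s|) (Icc 0 ε) := hx''c.abs
  set g : ℝ → ℝ := fun t => ∫ s in (0:ℝ)..t, |x'' s| with hgdef
  have hsub : ∀ s t : ℝ, s ∈ Icc (0:ℝ) ε → t ∈ Icc (0:ℝ) ε → uIcc s t ⊆ Icc (0:ℝ) ε :=
    fun s t hs ht => Set.ordConnected_Icc.uIcc_subset hs ht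
  have hinteg : ∀ s t : ℝ, s ∈ Icc (0:ℝ) ε → t ∈ Icc (0:ℝ) ε →
      IntervalIntegrable (fun u => |x'' u|) volume s t := fun s t hs ht =>
    (habs.mono (hsub s t hs ht)).intervalIntegrable
  have h0mem : (0:ℝ) ∈ Icc (0:ℝ) ε := left_mem_Icc.2 hε0.le
  have hgd : ∀ t ∈ Icc (0:ℝ) ε, HasDerivWithinAt g (|x'' t|) (Icc 0 ε) t := by
    intro t ht
    haveI : Fact (t ∈ Icc (0:ℝ) ε) := ⟨ht⟩
    exact intervalIntegral.integral_hasDerivWithinAt_right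
      (hinteg 0 t h0mem ht)
      (habs.stronglyMeasurableAtFilter_nhdsWithin measurableSet_Icc t)
      (habs t ht)
  have hgc : ContinuousOn g (Icc 0 ε) := fun t ht => (hgd t ht).continuousWithinAt
  have hgnn : ∀ t ∈ Icc (0:ℝ) ε, 0 ≤ g t := fun t ht =>
    intervalIntegral.integral_nonneg ht.1 (fun s _ => abs_nonneg _)
  have hgmono : ∀ s t : ℝ, s ∈ Icc (0:ℝ) ε → t ∈ Icc (0:ℝ) ε → s ≤ t → g s ≤ g t := by
    intro s t hs ht hst
    have h1 := intervalIntegral.integral_add_adjacent_intervals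
      (hinteg 0 s h0mem hs) (hinteg s t hs ht)
    have h2 : 0 ≤ ∫ u in s..t, |x'' u| :=
      intervalIntegral.integral_nonneg hst (fun u _ => abs_nonneg _)
    simp only [hgdef]
    rw [← h1]
    linarith
  have hx'diff : ∀ t ∈ Icc (0:ℝ) ε, |x' t - x' 0| ≤ g t := by
    intro t ht
    have heq : ∫ s in (0:ℝ)..t, x'' s = x' t - x' 0 := by
      apply intervalIntegral.integral_eq_sub_of_hasDeriv_right_of_le ht.1
        (hx'c.mono (Icc_subset_Icc le_rfl ht.2)) ?_
        ((hx''c.mono (hsub 0 t h0mem ht)).intervalIntegrable)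
      intro s hs
      have hsmem : Icc (0:ℝ) ε ∈ 𝓝 s := Icc_mem_nhds hs.1 (lt_of_lt_of_le hs.2 ht.2)
      exact ((hx' s ⟨hs.1.le, hs.2.le.trans ht.2⟩).hasDerivAt hsmem).hasDerivWithinAt
    calc |x' t - x' 0| = |∫ s in (0:ℝ)..t, x'' s| := by rw [heq]
      _ ≤ ∫ s in (0:ℝ)..t, |x'' s| := intervalIntegral.abs_integral_le_integral_abs ht.1
  have hx'bd : ∀ t ∈ Icc (0:ℝ) ε, |x' t| ≤ A + g t := by
    intro t ht
    have h1 := hx'diff t ht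
    have h2 : |x' t| - |x' 0| ≤ |x' t - x' 0| := abs_sub_abs_le_abs_sub _ _
    rw [← hAdef] at h2
    linarith
  have hxbd : ∀ t ∈ Icc (0:ℝ) ε, |x t| ≤ t * (A + g t) := by
    intro t ht
    have key := Convex.norm_image_sub_le_of_norm_hasDerivWithin_le
      (f := x) (f' := x') (s := Icc 0 t) (C := A + g t)
      (fun y hy => (hx y ⟨hy.1, hy.2.trans ht.2⟩).mono (Icc_subset_Icc le_rfl ht.2))
      (fun y hy => by
        have hyε : y ∈ Icc (0:ℝ) ε := ⟨hy.1, hy.2.trans ht.2⟩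
        have h1 := hx'bd y hyε
        have h2 := hgmono y t hyε ht hy.2
        rw [Real.norm_eq_abs]; linarith)
      (convex_Icc _ _) (left_mem_Icc.2 ht.1) (right_mem_Icc.2 ht.1)
    rw [hx0, sub_zero, sub_zero, Real.norm_eq_abs, Real.norm_eq_abs,
      abs_of_nonneg ht.1] at key
    linarith [key]
  have hexp : ∀ t ∈ Icc (0:ℝ) ε, A * (Real.exp (2*C*t) - 1) ≤ A/2 := by
    intro t ht
    have hy : 2*C*t ≤ 1/3 := by
      have h1 : t ≤ 1/(6*C) := ht.2.trans hεC
      have h6 : 0 < 6*C := by positivity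
      have h2 : 6*C*(1/(6*C)) = 1 := by field_simp
      nlinarith [mul_le_mul_of_nonneg_left h1 h6.le]
    have hE : Real.exp (2*C*t) ≤ 3/2 := by
      set y := 2*C*t with hydef
      have h1 : 1 - y ≤ Real.exp (-y) := by linarith [Real.add_one_le_exp (-y)]
      have h2 : Real.exp (-y) = (Real.exp y)⁻¹ := Real.exp_neg y
      have h3 : 0 < Real.exp y := Real.exp_pos y
      have h4 : Real.exp y * (Real.exp y)⁻¹ = 1 := mul_inv_cancel₀ h3.ne'
      nlinarith [mul_le_mul_of_nonneg_left h1 h3.le, mul_le_mul_of_nonneg_left hy h3.le]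
    nlinarith
  have hkey : ∀ b ∈ Icc (0:ℝ) ε, (∀ s ∈ Icc (0:ℝ) b, |x s| ≤ 1) →
      ∀ t ∈ Icc (0:ℝ) b, g t ≤ A/2 := by
    intro b hb hsmall t ht
    have hIcc : Icc (0:ℝ) b ⊆ Icc (0:ℝ) ε := Icc_subset_Icc le_rfl hb.2
    have hf' : ∀ s ∈ Ico (0:ℝ) b, HasDerivWithinAt g (|x'' s|) (Ici s) s := by
      intro s hs
      have hsε : s ∈ Icc (0:ℝ) ε := ⟨hs.1, hs.2.le.trans hb.2⟩
      refine (hgd s hsε).mono_of_mem_nhdsWithin ?_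
      have h1 : Iic ε ∈ 𝓝[Ici s] s :=
        nhdsWithin_le_nhds (Iic_mem_nhds (lt_of_lt_of_le hs.2 hb.2))
      filter_upwards [h1, self_mem_nhdsWithin] with u hu1 hu2
      exact ⟨le_trans hs.1 hu2, hu1⟩
    have ha : ‖g 0‖ ≤ 0 := by
      simp [hgdef, intervalIntegral.integral_same]
    have hbnd : ∀ s ∈ Ico (0:ℝ) b, ‖|x'' s|‖ ≤ 2*C*‖g s‖ + 2*C*A := by
      intro s hs
      have hsε : s ∈ Icc (0:ℝ) ε := ⟨hs.1, hs.2.le.trans hb.2⟩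
      have h1 := hbound s hsε
      have h2 : |x s| ≤ 1 := hsmall s ⟨hs.1, hs.2.le⟩
      have h3 : |x s| ≤ s * (A + g s) := hxbd s hsε
      have h4 : (x s)^2 ≤ |x s| := by
        nlinarith [sq_abs (x s), abs_nonneg (x s)]
      have h5 : |x' s| ≤ A + g s := hx'bd s hsε
      have h6 : 0 ≤ g s := hgnn s hsε
      have hs1 : s ≤ 1 := hsε.2.trans hε1
      have h7 : (x s)^2 ≤ A + g s := by
        nlinarith [mul_nonneg (sub_nonneg.2 hs1) (by linarith : (0:ℝ) ≤ A + g s)]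
      have h8 : |x'' s| ≤ C * ((A + g s) + (A + g s)) :=
        le_trans h1 (mul_le_mul_of_nonneg_left (by linarith) hC.le)
      rw [Real.norm_eq_abs, Real.norm_eq_abs, abs_abs, abs_of_nonneg h6]
      nlinarith
    have hG := norm_le_gronwallBound_of_norm_deriv_right_le
      (f := g) (f' := fun s => |x'' s|) (δ := 0) (K := 2*C) (ε := 2*C*A) (a := 0) (b := b)
      (hgc.mono hIcc) hf' ha hbnd t ht
    have hK : (2*C) ≠ 0 := by positivity
    rw [gronwallBound_of_K_ne_0 hK] at hG
    rw [Real.norm_eq_abs, abs_of_nonneg (hgnn t (hIcc ht))] at hG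
    have h5 : 2*C*A/(2*C) = A := by field_simp
    rw [h5, sub_zero] at hG
    have hG' : g t ≤ 0 * Real.exp (2*C*t) + A * (Real.exp (2*C*t) - 1) := hG
    have h6 := hexp t (hIcc ht)
    linarith
  have hgood : ∀ t ∈ Icc (0:ℝ) ε, |x t| ≤ 1 := by
    by_contra hcon
    push_neg at hcon
    obtain ⟨t₀, ht₀, ht₀1⟩ := hcon
    set Bad : Set ℝ := {t | t ∈ Icc (0:ℝ) ε ∧ 1 ≤ |x t|} with hBad
    have hBadne : Bad.Nonempty := ⟨t₀, ht₀, ht₀1.le⟩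
    have hBadclosed : IsClosed Bad := by
      have heq : Bad = Icc (0:ℝ) ε ∩ (fun t => |x t|) ⁻¹' Ici 1 := by
        ext u; simp [hBad]
      rw [heq]
      exact (continuous_abs.comp_continuousOn hxc).preimage_isClosed_of_isClosed
        isClosed_Icc isClosed_Ici
    have hBadbdd : BddBelow Bad := ⟨0, fun u hu => hu.1.1⟩
    set T := sInf Bad with hT
    have hTBad : T ∈ Bad := hBadclosed.csInf_mem hBadne hBadbdd
    have hTicc : T ∈ Icc (0:ℝ) ε := hTBad.1
    have hT1 : 1 ≤ |x T| := hTBad.2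
    have hT0 : 0 < T := by
      rcases lt_or_eq_of_le hTicc.1 with h | h
      · exact h
      · exfalso
        rw [← h, hx0] at hT1
        simp at hT1
        linarith
    have hlt : ∀ s ∈ Ico (0:ℝ) T, |x s| < 1 := by
      intro s hs
      by_contra hge
      push_neg at hge
      have hmem : s ∈ Bad := ⟨⟨hs.1, hs.2.le.trans hTicc.2⟩, hge⟩
      exact absurd (csInf_le hBadbdd hmem) (not_le.2 hs.2)
    have hsmall : ∀ s ∈ Ico (0:ℝ) T, |x s| ≤ 3/4 := by
      intro s hs
      have hsε : s ∈ Icc (0:ℝ) ε := ⟨hs.1, hs.2.le.trans hTicc.2⟩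
      have hg2 : g s ≤ A/2 :=
        hkey s hsε (fun u hu => (hlt u ⟨hu.1, lt_of_le_of_lt hu.2 hs.2⟩).le)
          s (right_mem_Icc.2 hs.1)
      have h3 : |x s| ≤ s * (A + g s) := hxbd s hsε
      have hgs0 : 0 ≤ g s := hgnn s hsε
      have hAgM : A + g s ≤ 3/2 * M := by
        rw [hAdef] at hg2 ⊢
        linarith [hAM]
      have h4 : s * (A + g s) ≤ ε * (3/2 * M) :=
        mul_le_mul hsε.2 hAgM (by linarith) hε0.le
      have h2M : 0 < 2*M := by positivity
      have h5 : ε * (3/2 * M) ≤ 3/4 := by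
        have : ε * (3/2*M) ≤ (1/(2*M)) * (3/2*M) := by nlinarith [hεM]
        calc ε * (3/2*M) ≤ (1/(2*M)) * (3/2*M) := this
          _ = 3/4 := by field_simp; ring
      linarith
    have hcT : ContinuousWithinAt x (Ico 0 T) T :=
      (hxc T hTicc).mono (fun u hu => ⟨hu.1, hu.2.le.trans hTicc.2⟩)
    have hne : (𝓝[Ico (0:ℝ) T] T).NeBot := by
      rw [← mem_closure_iff_nhdsWithin_neBot, closure_Ico (ne_of_lt hT0)]
      exact right_mem_Icc.2 hT0.le
    have hle : |x T| ≤ 3/4 := by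
      have htend : Filter.Tendsto (fun s => |x s|) (𝓝[Ico (0:ℝ) T] T) (𝓝 |x T|) :=
        (continuous_abs.continuousAt.tendsto).comp hcT
      exact le_of_tendsto htend (Filter.eventually_of_mem self_mem_nhdsWithin hsmall)
    linarith
  have hfinal : ∀ t ∈ Icc (0:ℝ) ε, g t ≤ A/2 :=
    hkey ε (right_mem_Icc.2 hε0.le) (fun s hs => hgood s hs)
  intro t ht
  have h1 : |x' t - x' 0| ≤ A/2 := (hx'diff t ht).trans (hfinal t ht)
  have h2 : |x' 0| - |x' t| ≤ |x' t - x' 0| := by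
    rw [abs_sub_comm]; exact abs_sub_abs_le_abs_sub _ _
  have h3 : |x' t| - |x' 0| ≤ |x' t - x' 0| := abs_sub_abs_le_abs_sub _ _
  rw [← hAdef] at h2 h3
  exact ⟨h1, by linarith, by linarith⟩
end

section
/- Let C > 0, T > 0 and let x : [0, T] → ℝ be twice continuously differentiable with x(0) = 0 and |x''(t)| ≤ C·(x(t)² + |x'(t)|) for all t ∈ [0, T]. Then for every t ∈ [0, T], |x'(t) − x'(0)| ≤ C · ∫₀ᵗ ( (t²/2)·x'(s)² + |x'(s)| ) ds. -/
/-!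
Write `x'(t) - x'(0) = ∫₀ᵗ x''` and bound `|x''|` by `C (x² + |x'|)`. Since `x(0) = 0`,
Cauchy–Schwarz applied to `x(s) = ∫₀ˢ x'` gives `x(s)² ≤ s ∫₀ᵗ x'²` for `s ≤ t`, and integrating
this over `[0, t]` gives `∫₀ᵗ x² ≤ (t²/2) ∫₀ᵗ x'²`.
-/

open intervalIntegral Set
open MeasureTheory (volume)

theorem sq_integral_le_sub_mul_integral_sq {f : ℝ → ℝ} {a b : ℝ} (hab : a ≤ b)
    (hf : IntervalIntegrable f volume a b) (hf2 : IntervalIntegrable (fun w => f w ^ 2) volume a b) :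
    (∫ w in a..b, f w) ^ 2 ≤ (b - a) * ∫ w in a..b, f w ^ 2 := by
  rcases hab.eq_or_lt with rfl | hlt
  · simp
  set I := ∫ w in a..b, f w
  set J := ∫ w in a..b, f w ^ 2
  have hexpand : ∫ w in a..b, ((b - a) * f w - I) ^ 2 = (b - a) * ((b - a) * J - I ^ 2) := by
    have hsq : ∀ w, ((b - a) * f w - I) ^ 2 = (b - a) ^ 2 * f w ^ 2 - 2 * (b - a) * I * f w + I ^ 2 :=
      fun w => by ring
    simp_rw [hsq]
    rw [integral_add ((hf2.const_mul _).sub (hf.const_mul _)) intervalIntegrable_const,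
      integral_sub (hf2.const_mul _) (hf.const_mul _), integral_const_mul, integral_const_mul,
      integral_const, smul_eq_mul]
    ring
  have hnonneg : 0 ≤ (b - a) * ((b - a) * J - I ^ 2) :=
    hexpand ▸ integral_nonneg hab fun _ _ => sq_nonneg _
  linarith [nonneg_of_mul_nonneg_right hnonneg (sub_pos.2 hlt)]

theorem integral_eq_sub_of_hasDerivWithinAt_Icc {E : Type*} [NormedAddCommGroup E]
    [NormedSpace ℝ E] [CompleteSpace E] {f f' : ℝ → E} {a b u : ℝ} (hu : u ∈ Icc a b)
    (hderiv : ∀ t ∈ Icc a b, HasDerivWithinAt f (f' t) (Icc a b) t)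
    (hint : IntervalIntegrable f' volume a u) :
    ∫ y in a..u, f' y = f u - f a := by
  have hsub : Icc a u ⊆ Icc a b := Icc_subset_Icc_right hu.2
  refine integral_eq_sub_of_hasDerivAt_of_le hu.1
    (fun t ht => (hderiv t (hsub ht)).continuousWithinAt.mono hsub) (fun t ht => ?_) hint
  exact (hderiv t (hsub (Ioo_subset_Icc_self ht))).hasDerivAt
    (Icc_mem_nhds ht.1 (ht.2.trans_le hu.2))

section Poincare

variable {x x' : ℝ → ℝ} {a b : ℝ}

theorem sq_sub_le_mul_integral_deriv_sq
    (hderiv : ∀ t ∈ Icc a b, HasDerivWithinAt x (x' t) (Icc a b) t)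
    (hcont : ContinuousOn x' (Icc a b)) {s : ℝ} (hs : s ∈ Icc a b) :
    (x s - x a) ^ 2 ≤ (s - a) * ∫ w in a..s, x' w ^ 2 := by
  have hcont' : ContinuousOn x' (Icc a s) := hcont.mono (Icc_subset_Icc_right hs.2)
  rw [← integral_eq_sub_of_hasDerivWithinAt_Icc hs hderiv (hcont'.intervalIntegrable_of_Icc hs.1)]
  exact sq_integral_le_sub_mul_integral_sq hs.1 (hcont'.intervalIntegrable_of_Icc hs.1)
    ((hcont'.pow 2).intervalIntegrable_of_Icc hs.1)

theorem integral_sq_le_of_eq_zero_of_hasDerivWithinAt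
    (hderiv : ∀ t ∈ Icc a b, HasDerivWithinAt x (x' t) (Icc a b) t)
    (hcont : ContinuousOn x' (Icc a b)) (hxa : x a = 0) {t : ℝ} (ht : t ∈ Icc a b) :
    ∫ s in a..t, x s ^ 2 ≤ (t - a) ^ 2 / 2 * ∫ s in a..t, x' s ^ 2 := by
  have hsub : Icc a t ⊆ Icc a b := Icc_subset_Icc_right ht.2
  have hxcont : ContinuousOn x (Icc a b) := fun s hs => (hderiv s hs).continuousWithinAt
  have hsq_int : IntervalIntegrable (fun s => x' s ^ 2) volume a t :=
    ((hcont.pow 2).mono hsub).intervalIntegrable_of_Icc ht.1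
  set K := ∫ s in a..t, x' s ^ 2
  have hpointwise : ∀ s ∈ Icc a t, x s ^ 2 ≤ (s - a) * K := fun s hs =>
    calc x s ^ 2 = (x s - x a) ^ 2 := by rw [hxa, sub_zero]
      _ ≤ (s - a) * ∫ w in a..s, x' w ^ 2 := sq_sub_le_mul_integral_deriv_sq hderiv hcont (hsub hs)
      _ ≤ (s - a) * K := by
        gcongr
        · linarith [hs.1]
        · exact integral_mono_interval le_rfl hs.1 hs.2
            (Filter.Eventually.of_forall fun _ => sq_nonneg _) hsq_int
  calc ∫ s in a..t, x s ^ 2 ≤ ∫ s in a..t, (s - a) * K :=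
        integral_mono_on ht.1 (((hxcont.pow 2).mono hsub).intervalIntegrable_of_Icc ht.1)
          ((by fun_prop : Continuous fun s => (s - a) * K).intervalIntegrable _ _) hpointwise
    _ = (t - a) ^ 2 / 2 * K := by
        rw [integral_mul_const]
        simp only [integral_comp_sub_right fun s => s, integral_id]
        ring

end Poincare

theorem stmt1_general (C T : ℝ) (hC : 0 < C) (x x' x'' : ℝ → ℝ)
    (hx' : ∀ t ∈ Set.Icc (0 : ℝ) T, HasDerivWithinAt x (x' t) (Set.Icc (0 : ℝ) T) t)
    (hx'' : ∀ t ∈ Set.Icc (0 : ℝ) T, HasDerivWithinAt x' (x'' t) (Set.Icc (0 : ℝ) T) t)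
    (hcont : ContinuousOn x'' (Set.Icc (0 : ℝ) T))
    (hx0 : x 0 = 0)
    (hineq : ∀ t ∈ Set.Icc (0 : ℝ) T, |x'' t| ≤ C * ((x t) ^ 2 + |x' t|)) :
    ∀ t ∈ Set.Icc (0 : ℝ) T,
      |x' t - x' 0| ≤ C * ∫ s in (0 : ℝ)..t, (t ^ 2 / 2 * (x' s) ^ 2 + |x' s|) := by
  intro t ht
  have hsub : Icc 0 t ⊆ Icc 0 T := Icc_subset_Icc_right ht.2
  have hint : ∀ g : ℝ → ℝ, ContinuousOn g (Icc 0 T) → IntervalIntegrable g volume 0 t :=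
    fun g hg => (hg.mono hsub).intervalIntegrable_of_Icc ht.1
  have hx'c : ContinuousOn x' (Icc 0 T) := fun s hs => (hx'' s hs).continuousWithinAt
  have hxc : ContinuousOn x (Icc 0 T) := fun s hs => (hx' s hs).continuousWithinAt
  have hpoincare := integral_sq_le_of_eq_zero_of_hasDerivWithinAt hx' hx'c hx0 ht
  rw [sub_zero] at hpoincare
  calc |x' t - x' 0| = |∫ s in (0 : ℝ)..t, x'' s| := by
        rw [integral_eq_sub_of_hasDerivWithinAt_Icc ht hx'' (hint _ hcont)]
    _ ≤ ∫ s in (0 : ℝ)..t, |x'' s| := abs_integral_le_integral_abs ht.1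
    _ ≤ ∫ s in (0 : ℝ)..t, C * (x s ^ 2 + |x' s|) :=
        integral_mono_on ht.1 (hint _ hcont.abs)
          (hint _ (continuousOn_const.mul ((hxc.pow 2).add hx'c.abs)))
          fun s hs => hineq s (hsub hs)
    _ = C * ((∫ s in (0 : ℝ)..t, x s ^ 2) + ∫ s in (0 : ℝ)..t, |x' s|) := by
        rw [integral_const_mul, integral_add (hint (fun s => x s ^ 2) (hxc.pow 2)) (hint _ hx'c.abs)]
    _ ≤ C * (t ^ 2 / 2 * (∫ s in (0 : ℝ)..t, x' s ^ 2) + ∫ s in (0 : ℝ)..t, |x' s|) := by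
        gcongr
    _ = C * ∫ s in (0 : ℝ)..t, (t ^ 2 / 2 * x' s ^ 2 + |x' s|) := by
        rw [integral_add ((hint (fun s => x' s ^ 2) (hx'c.pow 2)).const_mul _) (hint _ hx'c.abs),
          integral_const_mul]

/-- Let `C > 0`, `T > 0` and let `x : [0, T] → ℝ` be twice continuously differentiable (with
first derivative `x'` and second derivative `x''` on `[0, T]`), with `x 0 = 0` and
`|x'' t| ≤ C * (x t ^ 2 + |x' t|)` for all `t ∈ [0, T]`. Then for every `t ∈ [0, T]`,
`|x' t − x' 0| ≤ C * ∫ s in 0..t, ((t²/2) * x' s ^ 2 + |x' s|) ds`. -/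
theorem stmt1 (C T : ℝ) (hC : 0 < C) (hT : 0 < T) (x x' x'' : ℝ → ℝ)
    (hx' : ∀ t ∈ Set.Icc (0 : ℝ) T, HasDerivWithinAt x (x' t) (Set.Icc (0 : ℝ) T) t)
    (hx'' : ∀ t ∈ Set.Icc (0 : ℝ) T, HasDerivWithinAt x' (x'' t) (Set.Icc (0 : ℝ) T) t)
    (hcont : ContinuousOn x'' (Set.Icc (0 : ℝ) T))
    (hx0 : x 0 = 0)
    (hineq : ∀ t ∈ Set.Icc (0 : ℝ) T, |x'' t| ≤ C * ((x t) ^ 2 + |x' t|)) :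
    ∀ t ∈ Set.Icc (0 : ℝ) T,
      |x' t - x' 0| ≤ C * ∫ s in (0 : ℝ)..t, (t ^ 2 / 2 * (x' s) ^ 2 + |x' s|) :=
  stmt1_general C T hC x x' x'' hx' hx'' hcont hx0 hineq
end

section
/- Fix real numbers α with 0 ≤ α < 1 and M ≥ 1. There exist c > 0 and l₀ ∈ ℕ such that for every natural number l ≥ l₀ and every natural number m with l + m even and l − (M+1)·l^{1−α} ≤ m ≤ l − M·l^{1−α}, one has A(l, m) ≥ c·l^{α/4}. -/
/-!
Write `l = k + K` and `m = K - k`. Then `A(l, m)² = C(2k, k) C(2K, K) (2l + 1) / (4π · 4^l)`,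
and the Wallis-type bound `4^n ≤ 2 √n C(2n, n)` gives `A(l, m)² ≥ (2l + 1) / (16π √(kK))`.
In the given range of `m` we have `2k ≤ (M + 1) l^(1-α)` and `K ≤ l`, so
`√(kK) ≤ (M + 1)/2 · l^(1 - α/2)` and hence `A(l, m)² ≥ l^(α/2) / (8π (M + 1))`.
-/

/-- For `l, m : ℕ` with `m ≤ l` and `l + m` even, `sphA l m` is the modulus of the value of the
`L²`-normalized spherical harmonic `Y_l^m` on `S²` at the equator:
`A(l, m) = (1 / (2^l ((l−m)/2)! ((l+m)/2)!)) √((l−m)! (l+m)! (2l+1) / (4π))`. -/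
noncomputable def sphA (l m : ℕ) : ℝ :=
  (1 / ((2 : ℝ) ^ l * (Nat.factorial ((l - m) / 2) : ℝ) * (Nat.factorial ((l + m) / 2) : ℝ))) *
    Real.sqrt (((Nat.factorial (l - m) : ℝ) * (Nat.factorial (l + m) : ℝ) * (2 * l + 1)) /
      (4 * Real.pi))

open Real

namespace Nat

theorem four_pow_sq_le_four_mul_mul_centralBinom_sq {n : ℕ} (hn : n ≠ 0) :
    (4 ^ n) ^ 2 ≤ 4 * n * centralBinom n ^ 2 := by
  induction n, one_le_iff_ne_zero.mpr hn using Nat.le_induction with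
  | base => simp [centralBinom, choose]
  | succ n hn₁ ih =>
    refine Nat.le_of_mul_le_mul_left ?_ n.succ_pos
    calc (n + 1) * (4 ^ (n + 1)) ^ 2 = 16 * (n + 1) * (4 ^ n) ^ 2 := by ring
      _ ≤ 16 * (n + 1) * (4 * n * centralBinom n ^ 2) := by gcongr; exact ih (by omega)
      -- `4n(n + 1) ≤ (2n + 1)²`
      _ ≤ 4 * (2 * (2 * n + 1) * centralBinom n) ^ 2 := by ring_nf; omega
      _ = (n + 1) * (4 * (n + 1) * centralBinom (n + 1) ^ 2) := by
        rw [← succ_mul_centralBinom_succ]; ring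

theorem four_pow_le_two_mul_sqrt_mul_centralBinom {n : ℕ} (hn : n ≠ 0) :
    (4 : ℝ) ^ n ≤ 2 * √n * centralBinom n := by
  rw [← pow_le_pow_iff_left₀ (by positivity) (by positivity) two_ne_zero, mul_pow, mul_pow,
    sq_sqrt n.cast_nonneg]
  exact_mod_cast by linarith [four_pow_sq_le_four_mul_mul_centralBinom_sq hn]

theorem factorial_two_mul (n : ℕ) :
    (2 * n).factorial = n.centralBinom * n.factorial * n.factorial := by
  rw [two_mul, ← add_choose_mul_factorial_mul_factorial, centralBinom, two_mul]

end Nat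

lemma sphA_nonneg (l m : ℕ) : 0 ≤ sphA l m := by
  unfold sphA; positivity

lemma sphA_add_sub_sq {k K : ℕ} (h : k ≤ K) :
    sphA (k + K) (K - k) ^ 2 = Nat.centralBinom k * Nat.centralBinom K *
      (2 * ((k + K : ℕ) : ℝ) + 1) / (4 * π * 4 ^ (k + K)) := by
  have hsub : k + K - (K - k) = 2 * k := by omega
  have hadd : k + K + (K - k) = 2 * K := by omega
  rw [sphA, hsub, hadd, Nat.mul_div_cancel_left _ two_pos, Nat.mul_div_cancel_left _ two_pos,
    mul_pow, sq_sqrt (by positivity), Nat.factorial_two_mul, Nat.factorial_two_mul]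
  rw [show (4 : ℝ) ^ (k + K) = (2 ^ (k + K)) ^ 2 by rw [← pow_mul, mul_comm, pow_mul]; norm_num]
  push_cast
  field_simp

lemma div_le_sphA_add_sub_sq {k K : ℕ} (hk : k ≠ 0) (h : k ≤ K) :
    (2 * ((k + K : ℕ) : ℝ) + 1) / (16 * π * (√k * √K)) ≤ sphA (k + K) (K - k) ^ 2 := by
  have hK : K ≠ 0 := by omega
  have hCk := Nat.four_pow_le_two_mul_sqrt_mul_centralBinom hk
  have hCK := Nat.four_pow_le_two_mul_sqrt_mul_centralBinom hK
  have hk₀ : (Nat.centralBinom k : ℝ) ≠ 0 := mod_cast Nat.centralBinom_ne_zero k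
  have hK₀ : (Nat.centralBinom K : ℝ) ≠ 0 := mod_cast Nat.centralBinom_ne_zero K
  rw [sphA_add_sub_sq h]
  calc (2 * ((k + K : ℕ) : ℝ) + 1) / (16 * π * (√k * √K))
      = Nat.centralBinom k * Nat.centralBinom K * (2 * ((k + K : ℕ) : ℝ) + 1) /
        (4 * π * ((2 * √k * Nat.centralBinom k) * (2 * √K * Nat.centralBinom K))) := by
        field_simp; norm_num
    _ ≤ _ := by rw [pow_add]; gcongr

lemma sqrt_mul_sqrt_mul_rpow_le {x y l a α : ℝ} (hx : 0 ≤ x) (hy : 0 ≤ y) (hl : 0 < l)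
    (ha : 1 ≤ a) (hxl : x ≤ a * l ^ (1 - α)) (hyl : y ≤ l) :
    √x * √y * l ^ (α / 2) ≤ a * l := by
  have hpow : l ^ (1 - α) * (l ^ (α / 2)) ^ 2 = l := by
    rw [← rpow_natCast, ← rpow_mul hl.le, ← rpow_add hl]; norm_num
  rw [← pow_le_pow_iff_left₀ (by positivity) (by positivity) two_ne_zero, mul_pow, mul_pow,
    sq_sqrt hx, sq_sqrt hy]
  calc x * y * (l ^ (α / 2)) ^ 2 ≤ a * l ^ (1 - α) * l * (l ^ (α / 2)) ^ 2 := by gcongr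
    _ = a * l * l := by linear_combination (a * l) * hpow
    _ ≤ (a * l) ^ 2 := by nlinarith

lemma rpow_div_le_sphA_add_sub_sq {α M : ℝ} (hM : 1 ≤ M) {k K : ℕ} (hk : k ≠ 0) (hkK : k ≤ K)
    (hk_le : 2 * (k : ℝ) ≤ (M + 1) * ((k + K : ℕ) : ℝ) ^ (1 - α)) :
    ((k + K : ℕ) : ℝ) ^ (α / 2) / (8 * π * (M + 1)) ≤ sphA (k + K) (K - k) ^ 2 := by
  set l := k + K
  have hl : (0 : ℝ) < l := by positivity
  have hkK₀ : 0 < √k * √K :=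
    mul_pos (sqrt_pos.2 (mod_cast Nat.pos_of_ne_zero hk))
      (sqrt_pos.2 (mod_cast (by omega : 0 < K)))
  have hkey : √k * √K * (l : ℝ) ^ (α / 2) ≤ (M + 1) / 2 * l :=
    sqrt_mul_sqrt_mul_rpow_le k.cast_nonneg K.cast_nonneg hl (by linarith) (by linarith)
      (mod_cast Nat.le_add_left K k)
  refine le_trans ?_ (div_le_sphA_add_sub_sq hk hkK)
  rw [div_le_div_iff₀ (by positivity) (by positivity)]
  calc (l : ℝ) ^ (α / 2) * (16 * π * (√k * √K)) = 16 * π * (√k * √K * (l : ℝ) ^ (α / 2)) := by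
        ring
    _ ≤ 16 * π * ((M + 1) / 2 * l) := by gcongr
    _ = l * (8 * π * (M + 1)) := by ring
    _ ≤ (2 * l + 1) * (8 * π * (M + 1)) := by gcongr; linarith

theorem stmt10_general (α M : ℝ) (hM : 1 ≤ M) :
    ∃ c > (0 : ℝ), ∃ l₀ : ℕ, ∀ l : ℕ, l₀ ≤ l → ∀ m : ℕ, Even (l + m) →
      (l : ℝ) - (M + 1) * (l : ℝ) ^ (1 - α) ≤ (m : ℝ) →
      (m : ℝ) ≤ (l : ℝ) - M * (l : ℝ) ^ (1 - α) →
      c * (l : ℝ) ^ (α / 4) ≤ sphA l m := by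
  refine ⟨√(8 * π * (M + 1))⁻¹, by positivity, 1, fun l hl m hev hlow hup => ?_⟩
  have hl₀ : (0 : ℝ) < l := by exact_mod_cast hl
  have hml : m < l := by
    have : 0 < M * (l : ℝ) ^ (1 - α) := by positivity
    exact_mod_cast (by linarith : (m : ℝ) < l)
  obtain ⟨k, K, hk, hkK, rfl, rfl⟩ : ∃ k K, k ≠ 0 ∧ k ≤ K ∧ l = k + K ∧ m = K - k := by
    obtain ⟨t, ht⟩ := hev
    exact ⟨t - m, t, by omega, by omega, by omega, by omega⟩
  have hk_le : 2 * (k : ℝ) ≤ (M + 1) * ((k + K : ℕ) : ℝ) ^ (1 - α) := by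
    rw [Nat.cast_sub hkK] at hlow; push_cast at hlow ⊢; linarith
  rw [← pow_le_pow_iff_left₀ (by positivity) (sphA_nonneg _ _) two_ne_zero]
  calc (√(8 * π * (M + 1))⁻¹ * ((k + K : ℕ) : ℝ) ^ (α / 4)) ^ 2
      = ((k + K : ℕ) : ℝ) ^ (α / 2) / (8 * π * (M + 1)) := by
        rw [mul_pow, sq_sqrt (by positivity), ← rpow_natCast, ← rpow_mul hl₀.le]; ring_nf
    _ ≤ sphA (k + K) (K - k) ^ 2 := rpow_div_le_sphA_add_sub_sq hM hk hkK hk_le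

/-- Fix `0 ≤ α < 1` and `M ≥ 1`. There exist `c > 0` and `l₀` such that for all `l ≥ l₀` and
all `m` with `l + m` even and `l − (M+1)·l^(1−α) ≤ m ≤ l − M·l^(1−α)`, one has
`A(l, m) ≥ c · l^(α/4)`. -/
theorem stmt10 (α M : ℝ) (hα0 : 0 ≤ α) (hα1 : α < 1) (hM : 1 ≤ M) :
    ∃ c > (0 : ℝ), ∃ l₀ : ℕ, ∀ l : ℕ, l₀ ≤ l → ∀ m : ℕ, Even (l + m) →
      (l : ℝ) - (M + 1) * (l : ℝ) ^ (1 - α) ≤ (m : ℝ) →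
      (m : ℝ) ≤ (l : ℝ) - M * (l : ℝ) ^ (1 - α) →
      c * (l : ℝ) ^ (α / 4) ≤ sphA l m :=
  stmt10_general α M hM
end

section
/- Fix real numbers α with 0 ≤ α < 1, M ≥ 1, and s ∈ ℝ. There exist c > 0 and l₀ ∈ ℕ such that for every natural number l ≥ l₀ and every natural number m with l + m even and l − (M+1)·l^{1−α} ≤ m ≤ l − M·l^{1−α}, one has (1 − m²/(l(l+1)))^s · A(l, m) ≥ c·l^{α·(1/4 − s)}. (Note that m ≤ l guarantees 1 − m²/(l(l+1)) > 0, so the real power is well defined.) -/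
/-!
Put `d = l - m`. The weight `1 - m²/(l(l+1))` lies between `d/l` and `3d/l`, and the hypotheses
pin `d/l` between `M l^(-α)` and `(M+1) l^(-α)`, so the weight is `≍ l^(-α)`. Writing
`l - m = 2k` and `l + m = 2j`, one has `A(l,m)² = C(2k,k) C(2j,j) (2l+1) / (4π 4^l)`, and the
Wallis-type bound `16^n ≤ 4n C(2n,n)²` gives `A(l,m)⁴ ≥ l / (32π² d) ≥ l^α / (32π² (M+1))`.
Both estimates hold for every `l ≥ 1`.
-/

open Real Nat

theorem Nat.sixteen_pow_le_four_mul_centralBinom_sq {n : ℕ} (hn : 0 < n) :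
    16 ^ n ≤ 4 * n * centralBinom n ^ 2 := by
  induction n, hn using Nat.le_induction with
  | base => decide
  | succ n _ ih =>
    have hstep := succ_mul_centralBinom_succ n
    refine Nat.le_of_mul_le_mul_left ?_ (Nat.succ_pos n)
    calc (n + 1) * 16 ^ (n + 1) = 16 * (n + 1) * 16 ^ n := by ring
      _ ≤ 16 * (n + 1) * (4 * n * centralBinom n ^ 2) := by gcongr
      _ ≤ 4 * (2 * (2 * n + 1) * centralBinom n) ^ 2 := by
          have : 4 * n * (n + 1) ≤ (2 * n + 1) ^ 2 := by nlinarith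
          nlinarith
      _ = (n + 1) * (4 * (n + 1) * centralBinom (n + 1) ^ 2) := by rw [← hstep]; ring

theorem cast_centralBinom_mul_factorial_sq (n : ℕ) :
    (centralBinom n : ℝ) * (n ! : ℝ) ^ 2 = ((2 * n)! : ℝ) := by
  have h := choose_mul_factorial_mul_factorial (show n ≤ 2 * n by omega)
  rw [show 2 * n - n = n by omega] at h
  rw [centralBinom_eq_two_mul_choose, sq, ← mul_assoc]
  exact_mod_cast h

theorem sphA_sq {l m k j : ℕ} (hk : l - m = 2 * k) (hj : l + m = 2 * j) :
    sphA l m ^ 2 = centralBinom k * centralBinom j * (2 * l + 1) / (4 * π * 4 ^ l) := by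
  rw [sphA, hk, hj, Nat.mul_div_cancel_left _ two_pos, Nat.mul_div_cancel_left _ two_pos, mul_pow,
    sq_sqrt (by positivity), ← cast_centralBinom_mul_factorial_sq k,
    ← cast_centralBinom_mul_factorial_sq j,
    show (4 : ℝ) ^ l = (2 ^ l) ^ 2 by rw [← pow_mul, pow_mul']; norm_num]
  field_simp

theorem le_sphA_pow_four {l m : ℕ} (hml : m < l) (heven : Even (l + m)) :
    (l : ℝ) / (32 * π ^ 2 * ((l : ℝ) - m)) ≤ sphA l m ^ 4 := by
  obtain ⟨t, ht⟩ := heven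
  obtain ⟨k, j, hk, hj, hk0, hjl, hkj⟩ : ∃ k j : ℕ, l - m = 2 * k ∧ l + m = 2 * j ∧ 0 < k ∧
      j ≤ l ∧ k + j = l :=
    ⟨(l - m) / 2, (l + m) / 2, by omega, by omega, by omega, by omega, by omega⟩
  have hlm : (l : ℝ) - m = 2 * k := by
    rw [← Nat.cast_sub hml.le, hk]; push_cast; ring
  have hcb : (16 : ℝ) ^ k * 16 ^ j ≤
      4 * k * centralBinom k ^ 2 * (4 * j * centralBinom j ^ 2) := by
    gcongr
    · exact_mod_cast Nat.sixteen_pow_le_four_mul_centralBinom_sq hk0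
    · exact_mod_cast Nat.sixteen_pow_le_four_mul_centralBinom_sq (show 0 < j by omega)
  rw [← pow_add, hkj] at hcb
  have hjl' : (j : ℝ) ≤ l := by exact_mod_cast hjl
  rw [show sphA l m ^ 4 = (sphA l m ^ 2) ^ 2 by ring, sphA_sq hk hj, hlm,
    div_pow, div_le_div_iff₀ (by positivity) (by positivity)]
  have h4 : ((4 : ℝ) ^ l) ^ 2 = 16 ^ l := by rw [← pow_mul, mul_comm, pow_mul]; norm_num
  calc (l : ℝ) * (4 * π * 4 ^ l) ^ 2 = 16 * π ^ 2 * (l * 16 ^ l) := by rw [mul_pow, h4]; ring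
    _ ≤ 16 * π ^ 2 * (l * (4 * k * centralBinom k ^ 2 * (4 * j * centralBinom j ^ 2))) := by
        gcongr
    _ ≤ (centralBinom k * centralBinom j * (2 * l + 1)) ^ 2 * (32 * π ^ 2 * (2 * k)) := by
        have : 4 * (j : ℝ) * l ≤ (2 * l + 1) ^ 2 := by nlinarith
        have : (0 : ℝ) ≤ 16 * π ^ 2 * 4 * k * (centralBinom k * centralBinom j) ^ 2 := by positivity
        nlinarith

theorem sub_div_le_one_sub_sq_div {l m : ℝ} (hl : 0 < l) (hm : 0 ≤ m) (hml : m ≤ l) :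
    (l - m) / l ≤ 1 - m ^ 2 / (l * (l + 1)) := by
  rw [one_sub_div (by positivity), div_le_div_iff₀ hl (by positivity)]
  nlinarith [mul_nonneg hm (sub_nonneg.mpr hml)]

theorem one_sub_sq_div_le {l m : ℝ} (hl : 0 < l) (hml : 1 ≤ l - m) :
    1 - m ^ 2 / (l * (l + 1)) ≤ 3 * (l - m) / l := by
  rw [one_sub_div (by positivity), div_le_div_iff₀ (by positivity) hl]
  nlinarith [mul_le_mul_of_nonneg_left hml hl.le]

theorem min_rpow_mul_rpow_le_rpow {a b x w : ℝ} (ha : 0 < a) (hx : 0 < x) (hlo : a * x ≤ w)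
    (hhi : w ≤ b * x) (s : ℝ) : min (a ^ s) (b ^ s) * x ^ s ≤ w ^ s := by
  have hw : 0 < w := (mul_pos ha hx).trans_le hlo
  have hb : 0 < b := pos_of_mul_pos_left (hw.trans_le hhi) hx.le
  rcases le_total 0 s with hs | hs
  · calc min (a ^ s) (b ^ s) * x ^ s ≤ a ^ s * x ^ s := by gcongr; exact min_le_left _ _
      _ = (a * x) ^ s := (mul_rpow ha.le hx.le).symm
      _ ≤ w ^ s := rpow_le_rpow (by positivity) hlo hs
  · calc min (a ^ s) (b ^ s) * x ^ s ≤ b ^ s * x ^ s := by gcongr; exact min_le_right _ _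
      _ = (b * x) ^ s := (mul_rpow hb.le hx.le).symm
      _ ≤ w ^ s := rpow_le_rpow_of_nonpos hw hhi hs

theorem rpow_le_sphA {l m : ℕ} {α M : ℝ} (hM : 0 < M) (hml : m < l) (heven : Even (l + m))
    (hlm : (l : ℝ) - m ≤ (M + 1) * (l : ℝ) ^ (1 - α)) :
    (32 * π ^ 2 * (M + 1)) ^ (-(1 / 4 : ℝ)) * (l : ℝ) ^ (α / 4) ≤ sphA l m := by
  have hl : (0 : ℝ) < l := by exact_mod_cast (Nat.zero_le m).trans_lt hml
  have hd : (0 : ℝ) < l - m := sub_pos.mpr (by exact_mod_cast hml)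
  have hsphA : 0 ≤ sphA l m := by unfold sphA; positivity
  rw [← pow_le_pow_iff_left₀ (by positivity) hsphA four_ne_zero]
  calc ((32 * π ^ 2 * (M + 1)) ^ (-(1 / 4 : ℝ)) * (l : ℝ) ^ (α / 4)) ^ 4
      = (l : ℝ) ^ α / (32 * π ^ 2 * (M + 1)) := by
        rw [mul_pow, ← rpow_natCast, ← rpow_natCast (_ ^ (α / 4)), ← rpow_mul (by positivity),
          ← rpow_mul hl.le, show -(1 / 4 : ℝ) * ((4 : ℕ) : ℝ) = -1 by norm_num,
          show α / 4 * ((4 : ℕ) : ℝ) = α by push_cast; ring, rpow_neg_one]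
        ring
    _ ≤ (l : ℝ) / (32 * π ^ 2 * ((l : ℝ) - m)) := by
        rw [div_le_div_iff₀ (by positivity) (by positivity)]
        have hsplit : (l : ℝ) ^ α * (l : ℝ) ^ (1 - α) = l := by
          rw [← rpow_add hl, add_sub_cancel, rpow_one]
        calc (l : ℝ) ^ α * (32 * π ^ 2 * ((l : ℝ) - m))
            ≤ (l : ℝ) ^ α * (32 * π ^ 2 * ((M + 1) * (l : ℝ) ^ (1 - α))) := by gcongr
          _ = l * (32 * π ^ 2 * (M + 1)) := by linear_combination 32 * π ^ 2 * (M + 1) * hsplit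
    _ ≤ sphA l m ^ 4 := le_sphA_pow_four hml heven

theorem stmt11_general (α M s : ℝ) (hM : 1 ≤ M) :
    ∃ c > (0 : ℝ), ∃ l₀ : ℕ, ∀ l : ℕ, l₀ ≤ l → ∀ m : ℕ, Even (l + m) →
      (l : ℝ) - (M + 1) * (l : ℝ) ^ (1 - α) ≤ (m : ℝ) →
      (m : ℝ) ≤ (l : ℝ) - M * (l : ℝ) ^ (1 - α) →
      c * (l : ℝ) ^ (α * (1 / 4 - s)) ≤
        (1 - (m : ℝ) ^ 2 / ((l : ℝ) * ((l : ℝ) + 1))) ^ s * sphA l m := by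
  have hM0 : 0 < M := by linarith
  refine ⟨min (M ^ s) ((3 * (M + 1)) ^ s) * (32 * π ^ 2 * (M + 1)) ^ (-(1 / 4 : ℝ)),
    by positivity, 1, fun l hl m heven hlo hhi => ?_⟩
  have hl0 : (0 : ℝ) < l := by exact_mod_cast hl
  have hsplit : (l : ℝ) ^ (1 - α) = l ^ (-α) * l := by
    rw [← rpow_add_one hl0.ne', neg_add_eq_sub]
  have hml : m < l := by
    have : 0 < M * (l : ℝ) ^ (1 - α) := by positivity
    exact_mod_cast (show (m : ℝ) < l by linarith)
  have hd : 1 ≤ (l : ℝ) - m := by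
    rw [le_sub_iff_add_le']; exact_mod_cast hml
  have hw_lo : M * l ^ (-α) ≤ 1 - (m : ℝ) ^ 2 / (l * (l + 1)) := by
    refine le_trans ?_ (sub_div_le_one_sub_sq_div hl0 m.cast_nonneg (by linarith))
    rw [le_div_iff₀ hl0]; linear_combination hhi - M * hsplit
  have hw_hi : 1 - (m : ℝ) ^ 2 / (l * (l + 1)) ≤ 3 * (M + 1) * l ^ (-α) := by
    refine (one_sub_sq_div_le hl0 hd).trans ?_
    rw [div_le_iff₀ hl0]; linear_combination 3 * hlo + 3 * (M + 1) * hsplit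
  have hweight := min_rpow_mul_rpow_le_rpow hM0 (rpow_pos_of_pos hl0 (-α)) hw_lo hw_hi s
  have hA := rpow_le_sphA hM0 hml heven (α := α) (by linarith)
  calc min (M ^ s) ((3 * (M + 1)) ^ s) * (32 * π ^ 2 * (M + 1)) ^ (-(1 / 4 : ℝ)) *
        (l : ℝ) ^ (α * (1 / 4 - s))
      = min (M ^ s) ((3 * (M + 1)) ^ s) * ((l : ℝ) ^ (-α)) ^ s *
          ((32 * π ^ 2 * (M + 1)) ^ (-(1 / 4 : ℝ)) * (l : ℝ) ^ (α / 4)) := by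
        rw [← rpow_mul hl0.le, show α * (1 / 4 - s) = -α * s + α / 4 by ring, rpow_add hl0]
        ring
    _ ≤ _ := mul_le_mul hweight hA (by positivity)
        (rpow_nonneg ((by positivity : (0 : ℝ) ≤ M * l ^ (-α)).trans hw_lo) s)

/-- Fix `0 ≤ α < 1`, `M ≥ 1` and `s ∈ ℝ`. There exist `c > 0` and `l₀` such that for all
`l ≥ l₀` and all `m` with `l + m` even and `l − (M+1)·l^(1−α) ≤ m ≤ l − M·l^(1−α)`, one has
`(1 − m²/(l(l+1)))^s · A(l, m) ≥ c · l^(α(1/4 − s))`. -/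
theorem stmt11 (α M s : ℝ) (hα0 : 0 ≤ α) (hα1 : α < 1) (hM : 1 ≤ M) :
    ∃ c > (0 : ℝ), ∃ l₀ : ℕ, ∀ l : ℕ, l₀ ≤ l → ∀ m : ℕ, Even (l + m) →
      (l : ℝ) - (M + 1) * (l : ℝ) ^ (1 - α) ≤ (m : ℝ) →
      (m : ℝ) ≤ (l : ℝ) - M * (l : ℝ) ^ (1 - α) →
      c * (l : ℝ) ^ (α * (1 / 4 - s)) ≤
        (1 - (m : ℝ) ^ 2 / ((l : ℝ) * ((l : ℝ) + 1))) ^ s * sphA l m :=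
  stmt11_general α M s hM
end

section
/- Let n ≥ 2 and let q : ℝⁿ → ℝ be smooth (C^∞) with |q(ξ)| → ∞ as |ξ| → ∞. Suppose the level set Σ = q⁻¹(0) is nonempty and connected, that ∇q(ξ) ≠ 0 for every ξ ∈ Σ, and that for every ξ ∈ Σ and every v ∈ ℝⁿ with v ≠ 0 and ⟨∇q(ξ), v⟩ = 0 one has ⟨v, (Hess q(ξ)) v⟩ > 0. Then there exists a compact strictly convex set S ⊆ ℝⁿ with nonempty interior such that Σ = frontier S. In particular, every straight line meets Σ in at most two points, and if a line meets Σ in exactly one point ξ then the direction of the line is orthogonal to ∇q(ξ). -/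
open Set Filter Topology Metric

/-- If `g` has positive derivative at `t₀`, slightly to the right there are points with
strictly bigger value. -/
lemma aux_deriv_pos_right {g : ℝ → ℝ} {t₀ c : ℝ} (h : HasDerivAt g c t₀) (hc : 0 < c) :
    ∀ δ > (0:ℝ), ∃ t, t₀ < t ∧ t < t₀ + δ ∧ g t₀ < g t := by
  intro δ hδ
  have hs := hasDerivAt_iff_tendsto_slope.1 h
  have h1 : ∀ᶠ t in 𝓝[≠] t₀, 0 < slope g t₀ t := hs (Ioi_mem_nhds hc)
  have h2 : ∀ᶠ t in 𝓝[>] t₀, 0 < slope g t₀ t :=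
    h1.filter_mono (nhdsWithin_mono _ (fun t ht => ne_of_gt ht))
  have h3 : Ioo t₀ (t₀ + δ) ∈ 𝓝[>] t₀ := Ioo_mem_nhdsGT (by linarith)
  have h4 : ∀ᶠ t in 𝓝[>] t₀, t ∈ Ioo t₀ (t₀ + δ) := h3
  obtain ⟨t, ht1, ht2⟩ := (h2.and h4).exists
  refine ⟨t, ht2.1, ht2.2, ?_⟩
  have hlt : 0 < t - t₀ := by linarith [ht2.1]
  have := mul_pos ht1 hlt
  rw [slope_def_field, div_mul_cancel₀ _ (ne_of_gt hlt)] at this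
  linarith

/-- If `g` has negative derivative at `t₀`, slightly to the left there are points with
strictly bigger value. -/
lemma aux_deriv_neg_left {g : ℝ → ℝ} {t₀ c : ℝ} (h : HasDerivAt g c t₀) (hc : c < 0) :
    ∀ δ > (0:ℝ), ∃ t, t₀ - δ < t ∧ t < t₀ ∧ g t₀ < g t := by
  intro δ hδ
  have hs := hasDerivAt_iff_tendsto_slope.1 h
  have h1 : ∀ᶠ t in 𝓝[≠] t₀, slope g t₀ t < 0 := hs (Iio_mem_nhds hc)
  have h2 : ∀ᶠ t in 𝓝[<] t₀, slope g t₀ t < 0 :=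
    h1.filter_mono (nhdsWithin_mono _ (fun t ht => ne_of_lt ht))
  have h3 : Ioo (t₀ - δ) t₀ ∈ 𝓝[<] t₀ := Ioo_mem_nhdsLT (by linarith)
  have h4 : ∀ᶠ t in 𝓝[<] t₀, t ∈ Ioo (t₀ - δ) t₀ := h3
  obtain ⟨t, ht1, ht2⟩ := (h2.and h4).exists
  refine ⟨t, ht2.1, ht2.2, ?_⟩
  have hlt : t - t₀ < 0 := by linarith [ht2.2]
  have := mul_pos_of_neg_of_neg ht1 hlt
  rw [slope_def_field, div_mul_cancel₀ _ (ne_of_lt hlt)] at this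
  linarith

/-- Second derivative test: strict local minimum. -/
lemma aux_strict_local_min {g g' : ℝ → ℝ} (hg : ∀ t, HasDerivAt g (g' t) t) {t₀ c : ℝ}
    (h2 : HasDerivAt g' c t₀) (h0 : g' t₀ = 0) (hc : 0 < c) :
    ∃ δ > (0:ℝ), ∀ t, t ≠ t₀ → |t - t₀| < δ → g t₀ < g t := by
  have hs := hasDerivAt_iff_tendsto_slope.1 h2
  have h1 : ∀ᶠ t in 𝓝[≠] t₀, 0 < slope g' t₀ t := hs (Ioi_mem_nhds hc)
  rw [eventually_nhdsWithin_iff] at h1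
  rw [Metric.eventually_nhds_iff] at h1
  obtain ⟨δ, hδ, hδP⟩ := h1
  have hsign : ∀ t, |t - t₀| < δ → t ≠ t₀ → 0 < g' t / (t - t₀) := by
    intro t h1t h2t
    have := hδP (show dist t t₀ < δ by rwa [Real.dist_eq]) (by simpa using h2t)
    rwa [slope_def_field, h0, sub_zero] at this
  have hposR : ∀ t, t₀ < t → t < t₀ + δ → 0 < g' t := by
    intro t ht1 ht2
    have h1t : |t - t₀| < δ := by rw [abs_sub_lt_iff]; constructor <;> linarith
    have := hsign t h1t (ne_of_gt ht1)
    by_contra hle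
    push_neg at hle
    have : g' t / (t - t₀) ≤ 0 := div_nonpos_of_nonpos_of_nonneg hle (by linarith)
    linarith
  have hnegL : ∀ t, t₀ - δ < t → t < t₀ → g' t < 0 := by
    intro t ht1 ht2
    have h1t : |t - t₀| < δ := by rw [abs_sub_lt_iff]; constructor <;> linarith
    have := hsign t h1t (ne_of_lt ht2)
    by_contra hle
    push_neg at hle
    have : g' t / (t - t₀) ≤ 0 := div_nonpos_of_nonneg_of_nonpos hle (by linarith)
    linarith
  refine ⟨δ, hδ, ?_⟩
  intro t htne habs
  have hcont : ∀ s : Set ℝ, ContinuousOn g s := fun s x _ => (hg x).continuousAt.continuousWithinAt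
  rcases htne.lt_or_gt with hlt | hgt
  · obtain ⟨ζ, hζ, hζeq⟩ := exists_hasDerivAt_eq_slope g g' hlt (hcont _) (fun x _ => hg x)
    have hζneg : g' ζ < 0 := by
      apply hnegL ζ _ hζ.2
      have : t₀ - δ < t := by rw [abs_sub_lt_iff] at habs; linarith [habs.2]
      linarith [hζ.1]
    rw [hζeq] at hζneg
    have hd : 0 < t₀ - t := by linarith
    have := mul_neg_of_neg_of_pos hζneg hd
    rw [div_mul_cancel₀ _ (ne_of_gt hd)] at this
    linarith
  · obtain ⟨ζ, hζ, hζeq⟩ := exists_hasDerivAt_eq_slope g g' hgt (hcont _) (fun x _ => hg x)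
    have hζpos : 0 < g' ζ := by
      apply hposR ζ hζ.1
      have : t < t₀ + δ := by rw [abs_sub_lt_iff] at habs; linarith [habs.1]
      linarith [hζ.2]
    rw [hζeq] at hζpos
    have hd : 0 < t - t₀ := by linarith
    have := mul_pos hζpos hd
    rw [div_mul_cancel₀ _ (ne_of_gt hd)] at this
    linarith

section Lines

variable {E : Type*} [NormedAddCommGroup E] [NormedSpace ℝ E] {q : E → ℝ}

lemma aux_curve (a v : E) (t : ℝ) : HasDerivAt (fun s : ℝ => a + s • v) v t := by
  simpa using ((hasDerivAt_id t).smul_const v).const_add a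

lemma aux_hasDerivAt_line (hq : ContDiff ℝ (⊤ : ℕ∞) q) (a v : E) (t : ℝ) :
    HasDerivAt (fun s : ℝ => q (a + s • v)) (fderiv ℝ q (a + t • v) v) t :=
  ((hq.differentiable (by simp) (a + t • v)).hasFDerivAt).comp_hasDerivAt t (aux_curve a v t)

lemma aux_hasDerivAt_line' (hq : ContDiff ℝ (⊤ : ℕ∞) q) (a v : E) (t : ℝ) :
    HasDerivAt (fun s : ℝ => fderiv ℝ q (a + s • v) v)
      (fderiv ℝ (fderiv ℝ q) (a + t • v) v v) t := by
  have hd : HasDerivAt (fun s : ℝ => fderiv ℝ q (a + s • v))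
      (fderiv ℝ (fderiv ℝ q) (a + t • v) v) t :=
    (((hq.fderiv_right (m := (⊤ : ℕ∞)) (by simp)).differentiable (by simp) (a + t • v)).hasFDerivAt).comp_hasDerivAt
      t (aux_curve a v t)
  simpa using hd.clm_apply (hasDerivAt_const t v)

lemma aux_cont_fderiv (hq : ContDiff ℝ (⊤ : ℕ∞) q) : Continuous (fderiv ℝ q) :=
  (hq.fderiv_right (m := (⊤ : ℕ∞)) (by simp)).continuous

lemma aux_cont_fderiv2 (hq : ContDiff ℝ (⊤ : ℕ∞) q) : Continuous (fderiv ℝ (fderiv ℝ q)) :=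
  ((hq.fderiv_right (m := (⊤ : ℕ∞)) (by simp)).fderiv_right (m := (⊤ : ℕ∞)) (by simp)).continuous

/-- Strict local min along a line, from tangency and positive second derivative. -/
lemma aux_line_min (hq : ContDiff ℝ (⊤ : ℕ∞) q) {a v : E} {t₀ : ℝ}
    (h0 : fderiv ℝ q (a + t₀ • v) v = 0)
    (hpos : 0 < fderiv ℝ (fderiv ℝ q) (a + t₀ • v) v v) :
    ∃ δ > (0:ℝ), ∀ t, t ≠ t₀ → |t - t₀| < δ → q (a + t₀ • v) < q (a + t • v) := by
  have := aux_strict_local_min (g := fun s : ℝ => q (a + s • v))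
    (g' := fun s : ℝ => fderiv ℝ q (a + s • v) v)
    (fun t => aux_hasDerivAt_line hq a v t) (aux_hasDerivAt_line' hq a v t₀) h0 hpos
  exact this

end Lines
section Key

variable {E : Type*} [NormedAddCommGroup E] [NormedSpace ℝ E] {q : E → ℝ}

/-- Along a segment whose interior points all satisfy the tangential-Hessian positivity,
the interior values are strictly below the max of the endpoint values. -/
lemma aux_key (hq : ContDiff ℝ (⊤ : ℕ∞) q) {x y : E} (hxy : x ≠ y)
    (hQ : ∀ t ∈ Ioo (0:ℝ) 1, ∀ w : E, w ≠ 0 → fderiv ℝ q (x + t • (y - x)) w = 0 →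
      0 < fderiv ℝ (fderiv ℝ q) (x + t • (y - x)) w w) :
    ∀ s ∈ Ioo (0:ℝ) 1, q (x + s • (y - x)) < max (q x) (q y) := by
  set g : ℝ → ℝ := fun t => q (x + t • (y - x)) with hg
  have hgc : Continuous g :=
    hq.continuous.comp (continuous_const.add (continuous_id.smul continuous_const))
  have hg0 : g 0 = q x := by simp [hg]
  have hg1 : g 1 = q y := by simp [hg]
  intro s hs
  by_contra hcon
  push_neg at hcon
  -- a point of `Ioo 0 1` where the max over `Icc 0 1` is attained
  obtain ⟨t₀, ht₀m, ht₀'⟩ := isCompact_Icc.exists_isMaxOn (⟨0, by norm_num⟩ :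
    (Icc (0:ℝ) 1).Nonempty) hgc.continuousOn
  have ht₀ : ∀ u ∈ Icc (0:ℝ) 1, g u ≤ g t₀ := fun u hu => ht₀' hu
  have hmax : ∃ t₁ ∈ Ioo (0:ℝ) 1, ∀ u ∈ Icc (0:ℝ) 1, g u ≤ g t₁ := by
    by_cases hin : t₀ ∈ Ioo (0:ℝ) 1
    · exact ⟨t₀, hin, ht₀⟩
    · refine ⟨s, hs, fun u hu => (ht₀ u hu).trans ?_⟩
      have : t₀ = 0 ∨ t₀ = 1 := by
        rcases ht₀m with ⟨h1, h2⟩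
        rcases eq_or_lt_of_le h1 with h | h
        · exact Or.inl h.symm
        rcases eq_or_lt_of_le h2 with h' | h'
        · exact Or.inr h'
        exact absurd ⟨h, h'⟩ hin
      rcases this with h | h <;> rw [h]
      · rw [hg0]; exact le_trans (le_max_left _ _) hcon
      · rw [hg1]; exact le_trans (le_max_right _ _) hcon
  obtain ⟨t₁, ht₁, hmax⟩ := hmax
  have hv : y - x ≠ 0 := sub_ne_zero.2 (Ne.symm hxy)
  have hder := aux_hasDerivAt_line hq x (y - x) t₁
  have hloc : IsLocalMax g t₁ := by
    have : Icc (0:ℝ) 1 ∈ 𝓝 t₁ := Icc_mem_nhds ht₁.1 ht₁.2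
    exact Filter.eventually_of_mem this hmax
  have hd0 : fderiv ℝ q (x + t₁ • (y - x)) (y - x) = 0 := hloc.hasDerivAt_eq_zero hder
  have hpos := hQ t₁ ht₁ (y - x) hv hd0
  obtain ⟨δ, hδ, hmin⟩ := aux_line_min hq hd0 hpos
  set t₂ := t₁ + min δ (1 - t₁) / 2 with ht₂def
  have hinc : 0 < min δ (1 - t₁) / 2 := by
    have : 0 < 1 - t₁ := by linarith [ht₁.2]
    positivity
  have h1 : t₂ ≠ t₁ := by rw [ht₂def]; intro h; nlinarith [hinc]
  have h2 : |t₂ - t₁| < δ := by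
    rw [ht₂def]
    have h3 : min δ (1 - t₁) ≤ δ := min_le_left _ _
    rw [abs_of_pos (by linarith)]
    linarith
  have := hmin t₂ h1 h2
  have h4 : t₂ ∈ Icc (0:ℝ) 1 := by
    constructor
    · have := ht₁.1; rw [ht₂def]; linarith
    · have h5 : min δ (1 - t₁) ≤ 1 - t₁ := min_le_right _ _
      rw [ht₂def]; linarith
  exact absurd (hmax t₂ h4) (by simpa [hg] using not_le.2 this)

end Key

/-- A tube lemma for strict negativity on a compact parameter interval. -/
lemma aux_tube {X : Type*} [TopologicalSpace X] {F : X × ℝ → ℝ} (hF : Continuous F)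
    {K : Set ℝ} (hK : IsCompact K) {p₀ : X} (h : ∀ t ∈ K, F (p₀, t) < 0) :
    ∃ U : Set X, IsOpen U ∧ p₀ ∈ U ∧ ∀ p ∈ U, ∀ t ∈ K, F (p, t) < 0 := by
  have hopen : IsOpen {pt : X × ℝ | F pt < 0} := isOpen_lt hF continuous_const
  have hsub : ({p₀} : Set X) ×ˢ K ⊆ {pt : X × ℝ | F pt < 0} := by
    rintro ⟨p, t⟩ ⟨hp, ht⟩
    simp only [mem_singleton_iff] at hp
    subst hp
    exact h t ht
  obtain ⟨U, V, hU, hV, hpU, hKV, hUV⟩ :=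
    generalized_tube_lemma isCompact_singleton hK hopen hsub
  exact ⟨U, hU, hpU rfl, fun p hp t ht => hUV ⟨hp, hKV ht⟩⟩
section Euclid

variable {n : ℕ} {q : EuclideanSpace ℝ (Fin n) → ℝ}

lemma aux_sig_compact (hq : ContDiff ℝ (⊤ : ℕ∞) q)
    (hproper : Filter.Tendsto (fun ξ => |q ξ|) (Filter.cocompact (EuclideanSpace ℝ (Fin n)))
      Filter.atTop) : IsCompact {ξ : EuclideanSpace ℝ (Fin n) | q ξ = 0} := by
  have h1 : ∀ᶠ z in Filter.cocompact (EuclideanSpace ℝ (Fin n)), (1:ℝ) ≤ |q z| :=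
    hproper.eventually_ge_atTop 1
  obtain ⟨K, hK, hKs⟩ := Filter.mem_cocompact.1 h1
  apply hK.of_isClosed_subset (isClosed_eq hq.continuous continuous_const)
  intro ξ hξ
  by_contra hout
  have := hKs hout
  simp only [mem_setOf_eq] at this hξ
  rw [hξ] at this
  simp at this
  linarith

lemma aux_ext_conn (hn : 2 ≤ n) {R : ℝ} (hR : 0 ≤ R) :
    IsPreconnected {z : EuclideanSpace ℝ (Fin n) | R < ‖z‖} := by
  have hrank : 1 < Module.rank ℝ (EuclideanSpace ℝ (Fin n)) := by
    rw [← Module.finrank_eq_rank]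
    have : 1 < Module.finrank ℝ (EuclideanSpace ℝ (Fin n)) := by
      rw [finrank_euclideanSpace_fin]; omega
    exact_mod_cast this
  have hsph : IsConnected (sphere (0 : EuclideanSpace ℝ (Fin n)) 1) :=
    isConnected_sphere hrank 0 zero_le_one
  have hprod : IsConnected ((Ioi R) ×ˢ (sphere (0 : EuclideanSpace ℝ (Fin n)) 1)) :=
    isConnected_Ioi.prod hsph
  have himg := hprod.image (fun p => p.1 • p.2)
    (continuous_fst.smul continuous_snd).continuousOn
  have heq : (fun p : ℝ × EuclideanSpace ℝ (Fin n) => p.1 • p.2) ''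
      ((Ioi R) ×ˢ (sphere (0 : EuclideanSpace ℝ (Fin n)) 1)) =
      {z : EuclideanSpace ℝ (Fin n) | R < ‖z‖} := by
    ext z
    constructor
    · rintro ⟨⟨t, u⟩, ⟨ht, hu⟩, rfl⟩
      simp only [mem_setOf_eq]
      rw [norm_smul]
      rw [mem_sphere_zero_iff_norm] at hu
      rw [hu, mul_one]
      calc R < t := ht
        _ = |t| := (abs_of_pos (lt_of_le_of_lt hR ht)).symm
        _ = ‖t‖ := rfl
    · intro hz
      simp only [mem_setOf_eq] at hz
      have hz0 : ‖z‖ ≠ 0 := (lt_of_le_of_lt hR hz).ne'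
      refine ⟨(‖z‖, ‖z‖⁻¹ • z), ⟨hz, ?_⟩, ?_⟩
      · rw [mem_sphere_zero_iff_norm, norm_smul, norm_inv, norm_norm]
        field_simp
      · simp only
        rw [smul_smul]
        rw [mul_inv_cancel₀ hz0, one_smul]
  rw [heq] at himg
  exact himg.isPreconnected

end Euclid
section Euclid2

open RealInnerProductSpace

variable {n : ℕ} {q : EuclideanSpace ℝ (Fin n) → ℝ}

lemma aux_qpos_outside (hn : 2 ≤ n) (hq : ContDiff ℝ (⊤ : ℕ∞) q)
    (hB : ∀ ξ, q ξ = 0 → ∀ v : EuclideanSpace ℝ (Fin n), v ≠ 0 → fderiv ℝ q ξ v = 0 →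
      0 < fderiv ℝ (fderiv ℝ q) ξ v v)
    {ξs : EuclideanSpace ℝ (Fin n)} (hξs : q ξs = 0)
    (hmaxn : ∀ z, q z = 0 → ‖z‖ ≤ ‖ξs‖) :
    ∀ z, ‖ξs‖ < ‖z‖ → 0 < q z := by
  by_contra hcon
  push_neg at hcon
  obtain ⟨z₀, hz₀R, hz₀⟩ := hcon
  have hz₀neg : q z₀ < 0 := lt_of_le_of_ne hz₀ (fun h => absurd (hmaxn z₀ h) (not_le.2 hz₀R))
  have hneg : ∀ z, ‖ξs‖ < ‖z‖ → q z < 0 := by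
    intro z hz
    rcases lt_trichotomy (q z) 0 with h | h | h
    · exact h
    · exact absurd (hmaxn z h) (not_le.2 hz)
    · exfalso
      have hC := aux_ext_conn hn (norm_nonneg ξs)
      have himg := hC.image q hq.continuous.continuousOn
      have h0mem : (0:ℝ) ∈ q '' {w : EuclideanSpace ℝ (Fin n) | ‖ξs‖ < ‖w‖} :=
        himg.Icc_subset ⟨z₀, hz₀R, rfl⟩ ⟨z, hz, rfl⟩ ⟨le_of_lt hz₀neg, le_of_lt h⟩
      obtain ⟨w, hw, hw0⟩ := h0mem
      exact absurd (hmaxn w hw0) (not_le.2 hw)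
  -- find a direction orthogonal to ξs
  obtain ⟨v, hvmem, hvne⟩ : ∃ v ∈ (Submodule.span ℝ {ξs})ᗮ, v ≠ 0 := by
    apply Submodule.exists_mem_ne_zero_of_ne_bot
    intro hbot
    have horth := Submodule.finrank_add_finrank_orthogonal (K := Submodule.span ℝ {ξs})
    have hE : Module.finrank ℝ (EuclideanSpace ℝ (Fin n)) = n := finrank_euclideanSpace_fin
    have hsp : Module.finrank ℝ (Submodule.span ℝ ({ξs} : Set (EuclideanSpace ℝ (Fin n)))) ≤ 1 := by
      by_cases hz : ξs = 0
      · subst hz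
        rw [Submodule.span_zero_singleton, finrank_bot]
        omega
      · rw [finrank_span_singleton hz]
    rw [hbot, finrank_bot] at horth
    omega
  have hvorth : ⟪ξs, v⟫ = 0 :=
    (Submodule.mem_orthogonal _ v).1 hvmem ξs (Submodule.mem_span_singleton_self ξs)
  have hfar : ∀ t : ℝ, t ≠ 0 → ‖ξs‖ < ‖ξs + t • v‖ := by
    intro t ht
    have h2 : ‖ξs + t • v‖^2 = ‖ξs‖^2 + 2*⟪ξs, t•v⟫ + ‖t•v‖^2 := norm_add_sq_real _ _
    have h3 : ⟪ξs, t • v⟫ = 0 := by rw [real_inner_smul_right, hvorth, mul_zero]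
    have h4 : 0 < ‖t • v‖ := norm_pos_iff.2 (smul_ne_zero ht hvne)
    nlinarith [norm_nonneg (ξs + t • v), norm_nonneg ξs]
  have hz : ξs + (0:ℝ) • v = ξs := by simp
  have hg0 : ∀ t : ℝ, t ≠ 0 → q (ξs + t • v) < 0 := fun t ht => hneg _ (hfar t ht)
  have hloc : IsLocalMax (fun t : ℝ => q (ξs + t • v)) 0 := by
    apply Filter.Eventually.of_forall
    intro t
    show q (ξs + t • v) ≤ q (ξs + (0:ℝ) • v)
    rcases eq_or_ne t 0 with rfl | ht
    · exact le_refl _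
    · rw [hz, hξs]; exact le_of_lt (hg0 t ht)
  have hder := aux_hasDerivAt_line hq ξs v 0
  have hd0 : fderiv ℝ q (ξs + (0:ℝ) • v) v = 0 := hloc.hasDerivAt_eq_zero hder
  have hp' : 0 < fderiv ℝ (fderiv ℝ q) (ξs + (0:ℝ) • v) v v := by
    rw [hz]
    apply hB ξs hξs v hvne
    rw [hz] at hd0
    exact hd0
  obtain ⟨δ, hδ, hmin⟩ := aux_line_min hq hd0 hp'
  have hh := hmin (δ/2) (by positivity) (by rw [sub_zero, abs_of_pos (by positivity)]; linarith)
  rw [hz, hξs] at hh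
  exact absurd hh (not_lt.2 (le_of_lt (hg0 (δ/2) (ne_of_gt (by positivity)))))

lemma aux_qball (hq : ContDiff ℝ (⊤ : ℕ∞) q)
    (hB : ∀ ξ, q ξ = 0 → ∀ v : EuclideanSpace ℝ (Fin n), v ≠ 0 → fderiv ℝ q ξ v = 0 →
      0 < fderiv ℝ (fderiv ℝ q) ξ v v)
    {x : EuclideanSpace ℝ (Fin n)} (hx : q x = 0) :
    ∃ ρ > (0:ℝ), ∀ z ∈ ball x ρ, ∀ v : EuclideanSpace ℝ (Fin n), v ≠ 0 →
      fderiv ℝ q z v = 0 → 0 < fderiv ℝ (fderiv ℝ q) z v v := by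
  by_contra hcon
  push_neg at hcon
  have hk : ∀ k : ℕ, ∃ z ∈ ball x (1/(k+1)), ∃ v : EuclideanSpace ℝ (Fin n), ‖v‖ = 1 ∧
      fderiv ℝ q z v = 0 ∧ fderiv ℝ (fderiv ℝ q) z v v ≤ 0 := by
    intro k
    obtain ⟨z, hz, v, hvne, hv0, hvle⟩ := hcon (1/(k+1)) (by positivity)
    refine ⟨z, hz, ‖v‖⁻¹ • v, ?_, ?_, ?_⟩
    · rw [norm_smul, norm_inv, norm_norm, inv_mul_cancel₀ (norm_ne_zero_iff.2 hvne)]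
    · rw [map_smul, hv0, smul_zero]
    · have hexp : fderiv ℝ (fderiv ℝ q) z (‖v‖⁻¹ • v) (‖v‖⁻¹ • v)
          = ‖v‖⁻¹ * (‖v‖⁻¹ * fderiv ℝ (fderiv ℝ q) z v v) := by
        rw [map_smul]
        simp [map_smul, smul_eq_mul]
      rw [hexp]
      have h5 : (0:ℝ) ≤ ‖v‖⁻¹ := by positivity
      have h7 : ‖v‖⁻¹ * fderiv ℝ (fderiv ℝ q) z v v ≤ 0 := mul_nonpos_iff.2 (Or.inl ⟨h5, hvle⟩)
      exact mul_nonpos_iff.2 (Or.inl ⟨h5, h7⟩)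
  choose z hzball u hu h0 hle using hk
  have hztend : Filter.Tendsto z Filter.atTop (𝓝 x) := by
    rw [tendsto_iff_dist_tendsto_zero]
    apply squeeze_zero (fun k => dist_nonneg) (fun k => le_of_lt (mem_ball.1 (hzball k)))
    exact tendsto_one_div_add_atTop_nhds_zero_nat
  have husph : ∀ k, u k ∈ sphere (0 : EuclideanSpace ℝ (Fin n)) 1 := by
    intro k; rw [mem_sphere_zero_iff_norm]; exact hu k
  obtain ⟨uL, huL, φ, hφ, huconv⟩ := (isCompact_sphere (0 : EuclideanSpace ℝ (Fin n)) 1).tendsto_subseq husph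
  have hzφ : Filter.Tendsto (z ∘ φ) Filter.atTop (𝓝 x) := hztend.comp hφ.tendsto_atTop
  have hpair : Filter.Tendsto (fun k => (z (φ k), u (φ k))) Filter.atTop (𝓝 (x, uL)) :=
    hzφ.prodMk_nhds huconv
  have hcont1 : Continuous (fun p : (EuclideanSpace ℝ (Fin n)) × (EuclideanSpace ℝ (Fin n)) =>
      fderiv ℝ q p.1 p.2) := ((aux_cont_fderiv hq).comp continuous_fst).clm_apply continuous_snd
  have hcont2 : Continuous (fun p : (EuclideanSpace ℝ (Fin n)) × (EuclideanSpace ℝ (Fin n)) =>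
      fderiv ℝ (fderiv ℝ q) p.1 p.2 p.2) :=
    (((aux_cont_fderiv2 hq).comp continuous_fst).clm_apply continuous_snd).clm_apply continuous_snd
  have hlim1 : fderiv ℝ q x uL = 0 := by
    have ht := (hcont1.tendsto (x, uL)).comp hpair
    have : (fun k => fderiv ℝ q (z (φ k)) (u (φ k))) = fun _ => (0:ℝ) := by
      funext k; exact h0 (φ k)
    rw [show ((fun p : (EuclideanSpace ℝ (Fin n)) × (EuclideanSpace ℝ (Fin n)) =>
      fderiv ℝ q p.1 p.2) ∘ (fun k => (z (φ k), u (φ k)))) = fun k => fderiv ℝ q (z (φ k)) (u (φ k)) from rfl, this] at ht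
    exact (tendsto_nhds_unique tendsto_const_nhds ht).symm
  have hlim2 : fderiv ℝ (fderiv ℝ q) x uL uL ≤ 0 := by
    have ht := (hcont2.tendsto (x, uL)).comp hpair
    apply le_of_tendsto ht
    apply Filter.Eventually.of_forall
    intro k
    exact hle (φ k)
  have hune : uL ≠ 0 := by
    rw [mem_sphere_zero_iff_norm] at huL
    intro h; rw [h, norm_zero] at huL; norm_num at huL
  exact absurd (hB x hx uL hune hlim1) (not_lt.2 hlim2)

end Euclid2
section Pairs

variable {n : ℕ} {q : EuclideanSpace ℝ (Fin n) → ℝ}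

set_option maxHeartbeats 2000000 in
lemma aux_all_pairs (hq : ContDiff ℝ (⊤ : ℕ∞) q)
    (hconn : IsConnected {ξ : EuclideanSpace ℝ (Fin n) | q ξ = 0})
    (hB : ∀ ξ, q ξ = 0 → ∀ v : EuclideanSpace ℝ (Fin n), v ≠ 0 → fderiv ℝ q ξ v = 0 →
      0 < fderiv ℝ (fderiv ℝ q) ξ v v) :
    ∀ x y : EuclideanSpace ℝ (Fin n), q x = 0 → q y = 0 → x ≠ y →
      ∀ t ∈ Ioo (0:ℝ) 1, q (x + t • (y - x)) < 0 := by
  classical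
  set Sig : Set (EuclideanSpace ℝ (Fin n)) := {ξ | q ξ = 0} with hSigdef
  set P : Set (EuclideanSpace ℝ (Fin n) × EuclideanSpace ℝ (Fin n)) := Sig ×ˢ Sig with hPdef
  set A : Set (EuclideanSpace ℝ (Fin n) × EuclideanSpace ℝ (Fin n)) :=
    {p | p.1 = p.2 ∨ ∀ t ∈ Ioo (0:ℝ) 1, q (p.1 + t • (p.2 - p.1)) < 0} with hAdef
  -- open cover of A within P
  have hopenc : ∀ p₀ ∈ P ∩ A, ∃ U, IsOpen U ∧ p₀ ∈ U ∧ ∀ p ∈ P ∩ U, p ∈ A := by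
    rintro ⟨x, y⟩ ⟨⟨hx, hy⟩, hA⟩
    simp only [hSigdef, mem_setOf_eq] at hx hy
    by_cases hxy : x = y
    · subst hxy
      obtain ⟨ρ, hρ, hQ⟩ := aux_qball hq hB hx
      refine ⟨ball x ρ ×ˢ ball x ρ, isOpen_ball.prod isOpen_ball,
        ⟨mem_ball_self hρ, mem_ball_self hρ⟩, ?_⟩
      rintro ⟨x', y'⟩ ⟨⟨hx', hy'⟩, hbx, hby⟩
      simp only [hSigdef, mem_setOf_eq] at hx' hy'
      by_cases hne : x' = y'
      · exact Or.inl hne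
      · refine Or.inr (fun t ht => ?_)
        have hseg : ∀ s ∈ Ioo (0:ℝ) 1, x' + s • (y' - x') ∈ ball x ρ := by
          intro s hs
          have h1 : (1 - s) • x' + s • y' ∈ ball x ρ :=
            convex_ball x ρ hbx hby (by linarith [hs.2]) (le_of_lt hs.1) (by ring)
          have h2 : x' + s • (y' - x') = (1 - s) • x' + s • y' := by module
          rw [h2]; exact h1
        have hkey := aux_key hq hne (fun s hs w hw h0 => hQ _ (hseg s hs) w hw h0) t ht
        rw [hx', hy'] at hkey
        simpa using hkey
    · have hseg : ∀ t ∈ Ioo (0:ℝ) 1, q (x + t • (y - x)) < 0 := by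
        rcases hA with h | h
        · exact absurd h hxy
        · exact h
      have hv : y - x ≠ 0 := sub_ne_zero.2 (Ne.symm hxy)
      have hgd : ∀ t : ℝ, HasDerivAt (fun s : ℝ => q (x + s • (y - x)))
          (fderiv ℝ q (x + t • (y - x)) (y - x)) t := aux_hasDerivAt_line hq x (y - x)
      have he0 : x + (0:ℝ) • (y - x) = x := by simp
      have he1 : x + (1:ℝ) • (y - x) = y := by module
      -- endpoint derivative at 0 is negative
      have hc0 : fderiv ℝ q (x + (0:ℝ) • (y - x)) (y - x) < 0 := by
        have hle : fderiv ℝ q (x + (0:ℝ) • (y - x)) (y - x) ≤ 0 := by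
          by_contra hpos
          push_neg at hpos
          obtain ⟨t, h1, h2, h3⟩ := aux_deriv_pos_right (hgd 0) hpos 1 one_pos
          rw [he0, hx] at h3
          exact absurd (hseg t ⟨h1, by linarith⟩) (by linarith)
        rcases lt_or_eq_of_le hle with h | h
        · exact h
        · exfalso
          have h' : fderiv ℝ q x (y - x) = 0 := by rw [he0] at h; exact h
          have hpos2' : 0 < fderiv ℝ (fderiv ℝ q) (x + (0:ℝ) • (y - x)) (y - x) (y - x) := by
            rw [he0]; exact hB x hx (y - x) hv h'
          obtain ⟨δ, hδ, hmin⟩ := aux_line_min hq h hpos2'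
          have hs0 : 0 < min δ 1 / 2 := by positivity
          have := hmin (min δ 1 / 2) (ne_of_gt hs0)
            (by rw [sub_zero, abs_of_pos hs0]; have := min_le_left δ 1; linarith)
          rw [he0, hx] at this
          have hmem : min δ 1 / 2 ∈ Ioo (0:ℝ) 1 := by
            constructor
            · exact hs0
            · have := min_le_right δ 1; linarith
          linarith [hseg _ hmem]
      -- endpoint derivative at 1 is positive
      have hc1 : 0 < fderiv ℝ q (x + (1:ℝ) • (y - x)) (y - x) := by
        have hle : 0 ≤ fderiv ℝ q (x + (1:ℝ) • (y - x)) (y - x) := by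
          by_contra hneg
          push_neg at hneg
          obtain ⟨t, h1, h2, h3⟩ := aux_deriv_neg_left (hgd 1) hneg 1 one_pos
          rw [he1, hy] at h3
          exact absurd (hseg t ⟨by linarith, h2⟩) (by linarith)
        rcases lt_or_eq_of_le hle with h | h
        · exact h
        · exfalso
          have hq1 : q (x + (1:ℝ) • (y - x)) = 0 := by rw [he1]; exact hy
          have h' : fderiv ℝ q y (y - x) = 0 := by rw [he1] at h; exact h.symm
          have hpos2' : 0 < fderiv ℝ (fderiv ℝ q) (x + (1:ℝ) • (y - x)) (y - x) (y - x) := by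
            rw [he1]; exact hB y hy (y - x) hv h'
          obtain ⟨δ, hδ, hmin⟩ := aux_line_min hq h.symm hpos2'
          have hs0 : 0 < min δ 1 / 2 := by positivity
          have hne1 : 1 - min δ 1 / 2 ≠ 1 := by intro hcon2; nlinarith
          have := hmin (1 - min δ 1 / 2) hne1
            (by
              rw [show (1 - min δ 1 / 2) - 1 = -(min δ 1 / 2) by ring, abs_neg, abs_of_pos hs0]
              have := min_le_left δ 1; linarith)
          rw [hq1] at this
          have hmem : 1 - min δ 1 / 2 ∈ Ioo (0:ℝ) 1 := by
            constructor
            · have := min_le_right δ 1; linarith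
            · linarith
          linarith [hseg _ hmem]
      -- continuity of the derivative along the segment, in all variables
      have hvec : Continuous (fun pt : (EuclideanSpace ℝ (Fin n) × EuclideanSpace ℝ (Fin n)) × ℝ
          => pt.1.2 - pt.1.1) := (continuous_fst.snd).sub (continuous_fst.fst)
      have hΦ : Continuous (fun pt : (EuclideanSpace ℝ (Fin n) × EuclideanSpace ℝ (Fin n)) × ℝ
          => pt.1.1 + pt.2 • (pt.1.2 - pt.1.1)) :=
        (continuous_fst.fst).add (continuous_snd.smul hvec)
      have hF1 : Continuous (fun pt : (EuclideanSpace ℝ (Fin n) × EuclideanSpace ℝ (Fin n)) × ℝ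
          => fderiv ℝ q (pt.1.1 + pt.2 • (pt.1.2 - pt.1.1)) (pt.1.2 - pt.1.1)) :=
        ((aux_cont_fderiv hq).comp hΦ).clm_apply hvec
      have hF0 : Continuous (fun pt : (EuclideanSpace ℝ (Fin n) × EuclideanSpace ℝ (Fin n)) × ℝ
          => q (pt.1.1 + pt.2 • (pt.1.2 - pt.1.1))) := hq.continuous.comp hΦ
      -- the derivative function along the original segment
      have hc'cont : Continuous (fun t : ℝ => fderiv ℝ q (x + t • (y - x)) (y - x)) :=
        hF1.comp (Continuous.prodMk (continuous_const.prodMk continuous_const) continuous_id)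
      -- small ε
      obtain ⟨δ₁, hδ₁, hball₁⟩ := Metric.isOpen_iff.1
        (isOpen_lt hc'cont continuous_const) 0 hc0
      obtain ⟨δ₂, hδ₂, hball₂⟩ := Metric.isOpen_iff.1
        (isOpen_lt continuous_const hc'cont) 1 hc1
      set ε := min (min δ₁ δ₂) 1 / 4 with hεdef
      have hε : 0 < ε := by positivity
      have hεδ₁ : ε < δ₁ := by have h1 := min_le_left δ₁ δ₂; have h2 := min_le_left (min δ₁ δ₂) 1; nlinarith
      have hεδ₂ : ε < δ₂ := by have h1 := min_le_right δ₁ δ₂; have h2 := min_le_left (min δ₁ δ₂) 1; nlinarith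
      have hεq : ε ≤ 1/4 := by have h2 := min_le_right (min δ₁ δ₂) 1; nlinarith
      -- three tubes
      obtain ⟨U₁, hU₁o, hU₁m, hU₁p⟩ := aux_tube hF1 (isCompact_Icc (a := (0:ℝ)) (b := ε))
        (p₀ := (x, y)) (by
          intro t ht
          have : dist t 0 < δ₁ := by
            rw [Real.dist_eq, sub_zero, abs_of_nonneg ht.1]
            linarith [ht.2]
          exact hball₁ this)
      obtain ⟨U₂, hU₂o, hU₂m, hU₂p⟩ := aux_tube (F := fun pt => -(fderiv ℝ q
          (pt.1.1 + pt.2 • (pt.1.2 - pt.1.1)) (pt.1.2 - pt.1.1))) hF1.neg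
        (isCompact_Icc (a := (1-ε:ℝ)) (b := 1)) (p₀ := (x, y)) (by
          intro t ht
          have : dist t 1 < δ₂ := by
            rw [Real.dist_eq, abs_of_nonpos (by linarith [ht.2])]
            linarith [ht.1]
          have h2 := hball₂ this
          simp only [mem_setOf_eq] at h2
          simpa using h2)
      obtain ⟨U₃, hU₃o, hU₃m, hU₃p⟩ := aux_tube hF0 (isCompact_Icc (a := (ε:ℝ)) (b := 1-ε))
        (p₀ := (x, y)) (by
          intro t ht
          exact hseg t ⟨lt_of_lt_of_le hε ht.1, by linarith [ht.2, hε]⟩)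
      refine ⟨U₁ ∩ U₂ ∩ U₃, (hU₁o.inter hU₂o).inter hU₃o, ⟨⟨hU₁m, hU₂m⟩, hU₃m⟩, ?_⟩
      rintro ⟨x'', y''⟩ ⟨⟨hx'', hy''⟩, ⟨hpU₁, hpU₂⟩, hpU₃⟩
      simp only [hSigdef, mem_setOf_eq] at hx'' hy''
      by_cases hne'' : x'' = y''
      · exact Or.inl hne''
      · refine Or.inr (fun t ht => ?_)
        have hggd : ∀ s : ℝ, HasDerivAt (fun r : ℝ => q (x'' + r • (y'' - x'')))
            (fderiv ℝ q (x'' + s • (y'' - x'')) (y'' - x'')) s :=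
          aux_hasDerivAt_line hq x'' (y'' - x'')
        have hggc : Continuous (fun r : ℝ => q (x'' + r • (y'' - x''))) :=
          hq.continuous.comp (continuous_const.add (continuous_id.smul continuous_const))
        rcases le_or_gt t ε with hcase | hcase
        · -- strictly decreasing on [0, ε]
          have hanti : StrictAntiOn (fun r : ℝ => q (x'' + r • (y'' - x''))) (Icc 0 ε) := by
            apply strictAntiOn_of_deriv_neg (convex_Icc 0 ε) hggc.continuousOn
            intro s hs
            rw [interior_Icc] at hs
            rw [(hggd s).deriv]
            exact hU₁p _ hpU₁ s ⟨hs.1.le, hs.2.le⟩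
          have h5 := hanti ⟨le_refl 0, hε.le⟩ ⟨ht.1.le, hcase⟩ ht.1
          simp only at h5
          rw [show x'' + (0:ℝ) • (y'' - x'') = x'' by simp, hx''] at h5
          exact h5
        rcases le_or_gt t (1-ε) with hcase' | hcase'
        · exact hU₃p _ hpU₃ t ⟨hcase.le, hcase'⟩
        · have hmono : StrictMonoOn (fun r : ℝ => q (x'' + r • (y'' - x''))) (Icc (1-ε) 1) := by
            apply strictMonoOn_of_deriv_pos (convex_Icc (1-ε) 1) hggc.continuousOn
            intro s hs
            rw [interior_Icc] at hs
            rw [(hggd s).deriv]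
            have := hU₂p _ hpU₂ s ⟨hs.1.le, hs.2.le⟩
            simp only at this
            linarith
          have h5 := hmono ⟨hcase'.le, ht.2.le⟩ ⟨by linarith, le_refl 1⟩ ht.2
          simp only at h5
          rw [show x'' + (1:ℝ) • (y'' - x'') = y'' by module, hy''] at h5
          exact h5
  -- closed cover: complement of A is relatively open
  have hclosedc : ∀ p₀ ∈ P \ A, ∃ U, IsOpen U ∧ p₀ ∈ U ∧ ∀ p ∈ P ∩ U, p ∉ A := by
    rintro ⟨x, y⟩ ⟨⟨hx, hy⟩, hA⟩
    simp only [hSigdef, mem_setOf_eq] at hx hy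
    have hA' : ¬((x = y) ∨ ∀ t ∈ Ioo (0:ℝ) 1, q (x + t • (y - x)) < 0) := hA
    push_neg at hA'
    obtain ⟨hxy, t₀, ht₀, hge⟩ := hA'
    have hv : y - x ≠ 0 := sub_ne_zero.2 (Ne.symm hxy)
    have hpos : ∃ t₁ ∈ Ioo (0:ℝ) 1, 0 < q (x + t₁ • (y - x)) := by
      rcases lt_or_eq_of_le hge with hlt | heq
      · exact ⟨t₀, ht₀, hlt⟩
      · have hz0 : q (x + t₀ • (y - x)) = 0 := heq.symm
        have hδ0 : 0 < min t₀ (1 - t₀) := lt_min ht₀.1 (by linarith [ht₀.2])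
        rcases lt_trichotomy (fderiv ℝ q (x + t₀ • (y - x)) (y - x)) 0 with hc | hc | hc
        · obtain ⟨t, h1, h2, h3⟩ := aux_deriv_neg_left (aux_hasDerivAt_line hq x (y - x) t₀)
            hc _ hδ0
          refine ⟨t, ⟨?_, by linarith [ht₀.2]⟩, ?_⟩
          · have := min_le_left t₀ (1 - t₀); linarith
          · rw [hz0] at h3; exact h3
        · have hpos2 := hB _ hz0 _ hv hc
          obtain ⟨δ, hδ, hmin⟩ := aux_line_min hq hc hpos2
          set s := min δ (min t₀ (1 - t₀)) / 2 with hsdef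
          have hs0 : 0 < s := by positivity
          have hsmall : s < δ := by
            have := min_le_left δ (min t₀ (1 - t₀)); nlinarith
          have hsmall2 : s ≤ min t₀ (1 - t₀) / 2 := by
            have := min_le_right δ (min t₀ (1 - t₀)); nlinarith
          refine ⟨t₀ + s, ⟨by linarith [ht₀.1], ?_⟩, ?_⟩
          · have := min_le_right t₀ (1 - t₀); nlinarith
          · have := hmin (t₀ + s) (by intro hcon2; nlinarith)
              (by rw [show t₀ + s - t₀ = s by ring, abs_of_pos hs0]; exact hsmall)
            rw [hz0] at this; exact this
        · obtain ⟨t, h1, h2, h3⟩ := aux_deriv_pos_right (aux_hasDerivAt_line hq x (y - x) t₀)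
            hc _ hδ0
          refine ⟨t, ⟨by linarith [ht₀.1], ?_⟩, ?_⟩
          · have := min_le_right t₀ (1 - t₀); linarith
          · rw [hz0] at h3; exact h3
    obtain ⟨t₁, ht₁, hqt₁⟩ := hpos
    have hUopen : IsOpen {p : EuclideanSpace ℝ (Fin n) × EuclideanSpace ℝ (Fin n) |
        0 < q (p.1 + t₁ • (p.2 - p.1))} := by
      apply isOpen_lt continuous_const
      exact hq.continuous.comp (by fun_prop)
    refine ⟨_, hUopen, hqt₁, ?_⟩
    rintro ⟨x', y'⟩ ⟨⟨hx', hy'⟩, hU⟩ hmem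
    simp only [hSigdef, mem_setOf_eq] at hx' hy' hU
    rcases hmem with heq | hall
    · simp only at heq
      rw [← heq] at hU
      simp only [sub_self, smul_zero, add_zero] at hU
      rw [hx'] at hU
      exact absurd hU (lt_irrefl 0)
    · have := hall t₁ ht₁
      simp only at this
      linarith
  -- clopen argument on the connected set P
  have hPconn : IsConnected P := hconn.prod hconn
  haveI : PreconnectedSpace P := Subtype.preconnectedSpace hPconn.isPreconnected
  set A' : Set P := {p : P | (p : _ × _) ∈ A} with hA'def
  have hopen' : IsOpen A' := by
    rw [isOpen_iff_forall_mem_open]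
    intro p hp
    obtain ⟨U, hU, hpU, hUP⟩ := hopenc p ⟨p.2, hp⟩
    exact ⟨Subtype.val ⁻¹' U, fun r hr => hUP r ⟨r.2, hr⟩, hU.preimage continuous_subtype_val, hpU⟩
  have hclosed' : IsClosed A' := by
    rw [← isOpen_compl_iff, isOpen_iff_forall_mem_open]
    intro p hp
    obtain ⟨U, hU, hpU, hUP⟩ := hclosedc p ⟨p.2, hp⟩
    exact ⟨Subtype.val ⁻¹' U, fun r hr => hUP r ⟨r.2, hr⟩, hU.preimage continuous_subtype_val, hpU⟩
  obtain ⟨ξ₀, hξ₀⟩ := hconn.nonempty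
  have hξ₀' : ξ₀ ∈ Sig := hξ₀
  have hne' : A'.Nonempty := ⟨⟨(ξ₀, ξ₀), ⟨hξ₀', hξ₀'⟩⟩, Or.inl rfl⟩
  have huniv : A' = univ := IsClopen.eq_univ ⟨hclosed', hopen'⟩ hne'
  intro x y hx hy hxy t ht
  have hmem : ((x, y) : EuclideanSpace ℝ (Fin n) × EuclideanSpace ℝ (Fin n)) ∈ A := by
    have hmemP : ((x, y) : EuclideanSpace ℝ (Fin n) × EuclideanSpace ℝ (Fin n)) ∈ P := ⟨hx, hy⟩
    have : (⟨(x, y), hmemP⟩ : P) ∈ A' := huniv ▸ mem_univ _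
    exact this
  rcases hmem with heq | hall
  · exact absurd heq hxy
  · exact hall t ht

end Pairs
section Interval

variable {n : ℕ} {q : EuclideanSpace ℝ (Fin n) → ℝ}

lemma aux_interval (hq : ContDiff ℝ (⊤ : ℕ∞) q)
    (hAll : ∀ x y : EuclideanSpace ℝ (Fin n), q x = 0 → q y = 0 → x ≠ y →
      ∀ t ∈ Ioo (0:ℝ) 1, q (x + t • (y - x)) < 0)
    {R : ℝ} (hbound : ∀ z : EuclideanSpace ℝ (Fin n), q z ≤ 0 → ‖z‖ ≤ R)
    (a v : EuclideanSpace ℝ (Fin n)) (hv : v ≠ 0)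
    (hne : ∃ t : ℝ, q (a + t • v) ≤ 0) :
    ∃ t₁ t₂ : ℝ, t₁ ≤ t₂ ∧ q (a + t₁ • v) = 0 ∧ q (a + t₂ • v) = 0 ∧
      (∀ t : ℝ, q (a + t • v) ≤ 0 → t₁ ≤ t ∧ t ≤ t₂) ∧
      (∀ t ∈ Ioo t₁ t₂, q (a + t • v) < 0) := by
  have hgc : Continuous (fun t : ℝ => q (a + t • v)) :=
    hq.continuous.comp (continuous_const.add (continuous_id.smul continuous_const))
  have hclosed : IsClosed {t : ℝ | q (a + t • v) ≤ 0} := isClosed_le hgc continuous_const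
  have hTsub : {t : ℝ | q (a + t • v) ≤ 0} ⊆
      Icc (-((R + ‖a‖) / ‖v‖)) ((R + ‖a‖) / ‖v‖) := by
    intro t ht
    have h1 : ‖a + t • v‖ ≤ R := hbound _ ht
    have h2 : ‖t • v‖ ≤ R + ‖a‖ := by
      calc ‖t • v‖ = ‖(a + t • v) - a‖ := by rw [add_sub_cancel_left]
        _ ≤ ‖a + t • v‖ + ‖a‖ := norm_sub_le _ _
        _ ≤ R + ‖a‖ := by linarith
    rw [norm_smul, Real.norm_eq_abs] at h2
    have h3 : |t| ≤ (R + ‖a‖) / ‖v‖ := by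
      rw [le_div_iff₀ (norm_pos_iff.2 hv)]
      exact h2
    exact abs_le.1 h3
  have hcomp : IsCompact {t : ℝ | q (a + t • v) ≤ 0} :=
    isCompact_Icc.of_isClosed_subset hclosed hTsub
  have hTne : {t : ℝ | q (a + t • v) ≤ 0}.Nonempty := hne
  have hbdd1 : BddBelow {t : ℝ | q (a + t • v) ≤ 0} := hcomp.bddBelow
  have hbdd2 : BddAbove {t : ℝ | q (a + t • v) ≤ 0} := hcomp.bddAbove
  set t₁ := sInf {t : ℝ | q (a + t • v) ≤ 0} with ht₁def
  set t₂ := sSup {t : ℝ | q (a + t • v) ≤ 0} with ht₂def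
  have ht₁T : q (a + t₁ • v) ≤ 0 := hcomp.sInf_mem hTne
  have ht₂T : q (a + t₂ • v) ≤ 0 := hcomp.sSup_mem hTne
  have hbounds : ∀ t : ℝ, q (a + t • v) ≤ 0 → t₁ ≤ t ∧ t ≤ t₂ := fun t ht =>
    ⟨csInf_le hbdd1 ht, le_csSup hbdd2 ht⟩
  have hz1 : q (a + t₁ • v) = 0 := by
    rcases lt_or_eq_of_le ht₁T with h | h
    · exfalso
      obtain ⟨δ, hδ, hb⟩ := Metric.isOpen_iff.1 (isOpen_lt hgc continuous_const) t₁ h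
      have hmem : q (a + (t₁ - δ/2) • v) < 0 := by
        apply hb
        rw [mem_ball, Real.dist_eq, show t₁ - δ/2 - t₁ = -(δ/2) by ring, abs_neg,
          abs_of_pos (by positivity)]
        linarith
      have := csInf_le hbdd1 (le_of_lt hmem)
      rw [← ht₁def] at this
      linarith
    · exact h
  have hz2 : q (a + t₂ • v) = 0 := by
    rcases lt_or_eq_of_le ht₂T with h | h
    · exfalso
      obtain ⟨δ, hδ, hb⟩ := Metric.isOpen_iff.1 (isOpen_lt hgc continuous_const) t₂ h
      have hmem : q (a + (t₂ + δ/2) • v) < 0 := by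
        apply hb
        rw [mem_ball, Real.dist_eq, show t₂ + δ/2 - t₂ = δ/2 by ring,
          abs_of_pos (by positivity)]
        linarith
      have := le_csSup hbdd2 (le_of_lt hmem)
      rw [← ht₂def] at this
      linarith
    · exact h
  refine ⟨t₁, t₂, le_csSup hbdd2 ht₁T, hz1, hz2, hbounds, ?_⟩
  intro t ht
  have h12 : t₁ < t₂ := lt_trans ht.1 ht.2
  have hPQ : a + t₁ • v ≠ a + t₂ • v := by
    intro hcon
    have h'' : t₁ • v = t₂ • v := add_left_cancel hcon
    have h3 : (t₁ - t₂) • v = 0 := by rw [sub_smul, h'', sub_self]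
    rcases smul_eq_zero.1 h3 with h | h
    · have : t₁ = t₂ := by linarith [sub_eq_zero.1 h]
      exact absurd this (ne_of_lt h12)
    · exact hv h
  have hs : (t - t₁)/(t₂ - t₁) ∈ Ioo (0:ℝ) 1 := by
    constructor
    · exact div_pos (by linarith [ht.1]) (by linarith)
    · rw [div_lt_one (by linarith)]; linarith [ht.2]
  have hpt := hAll _ _ hz1 hz2 hPQ _ hs
  have hrw : (a + t₁ • v) + ((t - t₁)/(t₂ - t₁)) • ((a + t₂ • v) - (a + t₁ • v))
      = a + t • v := by
    have h1 : (a + t₂ • v) - (a + t₁ • v) = (t₂ - t₁) • v := by rw [sub_smul]; abel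
    rw [h1, smul_smul, div_mul_cancel₀ _ (ne_of_gt (by linarith : (0:ℝ) < t₂ - t₁)),
      sub_smul]
    abel
  rw [hrw] at hpt
  exact hpt

end Interval
set_option maxHeartbeats 1000000 in
/-- Let `n ≥ 2` and let `q : ℝⁿ → ℝ` be smooth with `|q ξ| → ∞` as `|ξ| → ∞`. If the level set
`Σ = q⁻¹ 0` is nonempty and connected, `∇q ≠ 0` on `Σ`, and the Hessian of `q` is positive
definite on the tangent space of `Σ` (positive definite second fundamental form), then `Σ` is
the boundary of a compact strictly convex set with nonempty interior. In particular every line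
meets `Σ` in at most two points, and a line meeting `Σ` in exactly one point `ξ` has direction
orthogonal to `∇q ξ`. -/
theorem stmt14 {n : ℕ} (hn : 2 ≤ n) (q : EuclideanSpace ℝ (Fin n) → ℝ)
    (hq : ContDiff ℝ (⊤ : ℕ∞) q)
    (hproper : Filter.Tendsto (fun ξ => |q ξ|) (Filter.cocompact (EuclideanSpace ℝ (Fin n)))
      Filter.atTop)
    (hconn : IsConnected {ξ : EuclideanSpace ℝ (Fin n) | q ξ = 0})
    (hgrad : ∀ ξ : EuclideanSpace ℝ (Fin n), q ξ = 0 → fderiv ℝ q ξ ≠ 0)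
    (hhess : ∀ ξ : EuclideanSpace ℝ (Fin n), q ξ = 0 →
      ∀ v : EuclideanSpace ℝ (Fin n), v ≠ 0 → fderiv ℝ q ξ v = 0 →
        0 < iteratedFDeriv ℝ 2 q ξ ![v, v]) :
    ∃ S : Set (EuclideanSpace ℝ (Fin n)),
      IsCompact S ∧ (interior S).Nonempty ∧
      (∀ x ∈ S, ∀ y ∈ S, x ≠ y → openSegment ℝ x y ⊆ interior S) ∧
      {ξ : EuclideanSpace ℝ (Fin n) | q ξ = 0} = frontier S ∧
      (∀ a v : EuclideanSpace ℝ (Fin n), v ≠ 0 →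
        ({t : ℝ | q (a + t • v) = 0}).encard ≤ 2) ∧
      (∀ a v : EuclideanSpace ℝ (Fin n), v ≠ 0 → ∀ t₀ : ℝ,
        {t : ℝ | q (a + t • v) = 0} = {t₀} → fderiv ℝ q (a + t₀ • v) v = 0) := by
  classical
  -- Hessian in bilinear form
  have hB : ∀ ξ, q ξ = 0 → ∀ v : EuclideanSpace ℝ (Fin n), v ≠ 0 → fderiv ℝ q ξ v = 0 →
      0 < fderiv ℝ (fderiv ℝ q) ξ v v := by
    intro ξ hξ v hv h0
    have := hhess ξ hξ v hv h0
    rw [iteratedFDeriv_two_apply] at this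
    simpa using this
  -- the zero set is compact and nonempty; pick a farthest point
  have hSigC : IsCompact {ξ : EuclideanSpace ℝ (Fin n) | q ξ = 0} := aux_sig_compact hq hproper
  obtain ⟨ξs, hξsmem, hmax'⟩ := hSigC.exists_isMaxOn hconn.nonempty
    (continuous_norm.continuousOn)
  have hξs : q ξs = 0 := hξsmem
  have hmaxn : ∀ z : EuclideanSpace ℝ (Fin n), q z = 0 → ‖z‖ ≤ ‖ξs‖ := fun z hz => hmax' hz
  have hout : ∀ z : EuclideanSpace ℝ (Fin n), ‖ξs‖ < ‖z‖ → 0 < q z :=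
    aux_qpos_outside hn hq hB hξs hmaxn
  have hbound : ∀ z : EuclideanSpace ℝ (Fin n), q z ≤ 0 → ‖z‖ ≤ ‖ξs‖ := by
    intro z hz
    by_contra hcon
    push_neg at hcon
    linarith [hout z hcon]
  have hAll := aux_all_pairs hq hconn hB
  -- the convex body
  refine ⟨{z : EuclideanSpace ℝ (Fin n) | q z ≤ 0}, ?_, ?_, ?_, ?_, ?_, ?_⟩
  · -- compactness
    exact (isCompact_closedBall (0 : EuclideanSpace ℝ (Fin n)) ‖ξs‖).of_isClosed_subset
      (isClosed_le hq.continuous continuous_const)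
      (fun z hz => mem_closedBall_zero_iff.2 (hbound z hz))
  · -- nonempty interior
    obtain ⟨w, hw⟩ : ∃ w : EuclideanSpace ℝ (Fin n), fderiv ℝ q ξs w ≠ 0 := by
      by_contra hcon
      push_neg at hcon
      exact hgrad ξs hξs (ContinuousLinearMap.ext fun w => hcon w)
    obtain ⟨w, hw⟩ : ∃ w : EuclideanSpace ℝ (Fin n), fderiv ℝ q ξs w < 0 := by
      rcases hw.lt_or_gt with h | h
      · exact ⟨w, h⟩
      · exact ⟨-w, by rw [map_neg]; linarith⟩
    have hgd := aux_hasDerivAt_line hq ξs w 0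
    have hneg : HasDerivAt (fun t : ℝ => -(q (ξs + t • w)))
        (-(fderiv ℝ q (ξs + (0:ℝ) • w) w)) 0 := hgd.neg
    have hpos : 0 < -(fderiv ℝ q (ξs + (0:ℝ) • w) w) := by
      rw [show ξs + (0:ℝ) • w = ξs by simp]; linarith
    obtain ⟨t, h1, h2, h3⟩ := aux_deriv_pos_right hneg hpos 1 one_pos
    have hzlt : q (ξs + t • w) < 0 := by
      rw [show ξs + (0:ℝ) • w = ξs by simp, hξs] at h3
      simpa using h3
    refine ⟨ξs + t • w, ?_⟩
    have hsub : {z : EuclideanSpace ℝ (Fin n) | q z < 0} ⊆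
        interior {z : EuclideanSpace ℝ (Fin n) | q z ≤ 0} :=
      interior_maximal (Set.setOf_subset_setOf.2 (fun z hz => le_of_lt hz)) (isOpen_lt hq.continuous continuous_const)
    exact hsub hzlt
  · -- strict convexity
    intro x hx y hy hxy
    rw [openSegment_eq_image']
    rintro z ⟨θ, hθ, rfl⟩
    have hv : y - x ≠ 0 := sub_ne_zero.2 (Ne.symm hxy)
    have hex : ∃ t : ℝ, q (x + t • (y - x)) ≤ 0 := ⟨0, by simpa using hx⟩
    obtain ⟨t₁, t₂, h12, hz1, hz2, hbnds, hint⟩ := aux_interval hq hAll hbound x (y - x) hv hex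
    have h0m := hbnds 0 (by simpa using hx)
    have h1m := hbnds 1 (by rw [show x + (1:ℝ) • (y - x) = y by module]; exact hy)
    have hθ12 : θ ∈ Ioo t₁ t₂ := ⟨lt_of_le_of_lt h0m.1 hθ.1, lt_of_lt_of_le hθ.2 h1m.2⟩
    have hsub : {z : EuclideanSpace ℝ (Fin n) | q z < 0} ⊆
        interior {z : EuclideanSpace ℝ (Fin n) | q z ≤ 0} :=
      interior_maximal (Set.setOf_subset_setOf.2 (fun z hz => le_of_lt hz)) (isOpen_lt hq.continuous continuous_const)
    exact hsub (hint θ hθ12)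
  · -- frontier
    have hSclosed : IsClosed {z : EuclideanSpace ℝ (Fin n) | q z ≤ 0} :=
      isClosed_le hq.continuous continuous_const
    have hint_eq : interior {z : EuclideanSpace ℝ (Fin n) | q z ≤ 0} =
        {z : EuclideanSpace ℝ (Fin n) | q z < 0} := by
      apply subset_antisymm
      · intro z hz
        have hzS : q z ≤ 0 := by
          have h' : z ∈ {z : EuclideanSpace ℝ (Fin n) | q z ≤ 0} := interior_subset hz
          exact h'
        rcases lt_or_eq_of_le hzS with h | h
        · exact h
        · exfalso
          have hz0 : q z = 0 := h
          obtain ⟨w, hw⟩ : ∃ w : EuclideanSpace ℝ (Fin n), 0 < fderiv ℝ q z w := by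
            obtain ⟨w, hw⟩ : ∃ w : EuclideanSpace ℝ (Fin n), fderiv ℝ q z w ≠ 0 := by
              by_contra hcon
              push_neg at hcon
              exact hgrad z hz0 (ContinuousLinearMap.ext fun w => hcon w)
            rcases hw.lt_or_gt with h' | h'
            · exact ⟨-w, by rw [map_neg]; linarith⟩
            · exact ⟨w, h'⟩
          obtain ⟨ε, hε, hball⟩ := Metric.mem_nhds_iff.1 (mem_interior_iff_mem_nhds.1 hz)
          have hgd := aux_hasDerivAt_line hq z w 0
          have hpos : 0 < fderiv ℝ q (z + (0:ℝ) • w) w := by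
            rw [show z + (0:ℝ) • w = z by simp]; exact hw
          obtain ⟨t, h1, h2, h3⟩ := aux_deriv_pos_right hgd hpos (ε / (‖w‖ + 1))
            (by positivity)
          rw [show z + (0:ℝ) • w = z by simp, hz0] at h3
          have hmemball : z + t • w ∈ ball z ε := by
            rw [mem_ball, dist_eq_norm, show z + t • w - z = t • w by abel, norm_smul,
              Real.norm_eq_abs, abs_of_pos h1]
            have h4 : t * (‖w‖ + 1) < ε := (lt_div_iff₀ (by positivity)).1 (by linarith : t < ε / (‖w‖ + 1))
            nlinarith [norm_nonneg w, h1]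
          have := hball hmemball
          simp only [mem_setOf_eq] at this
          linarith
      · exact interior_maximal (Set.setOf_subset_setOf.2 (fun z hz => le_of_lt hz))
          (isOpen_lt hq.continuous continuous_const)
    rw [hSclosed.frontier_eq, hint_eq]
    ext ξ
    simp only [mem_setOf_eq, mem_diff]
    constructor
    · intro h
      exact ⟨le_of_eq h, by rw [h]; exact lt_irrefl 0⟩
    · intro ⟨h1, h2⟩
      exact le_antisymm h1 (not_lt.1 h2)
  · -- at most two intersection points with any line
    intro a v hv
    by_cases hex : ∃ t : ℝ, q (a + t • v) ≤ 0
    · obtain ⟨t₁, t₂, h12, hz1, hz2, hbnds, hint⟩ := aux_interval hq hAll hbound a v hv hex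
      have hsub : {t : ℝ | q (a + t • v) = 0} ⊆ {t₁, t₂} := by
        intro t ht
        simp only [mem_setOf_eq] at ht
        have hb := hbnds t (le_of_eq ht)
        rcases lt_or_eq_of_le hb.1 with h1' | h1'
        · rcases lt_or_eq_of_le hb.2 with h2' | h2'
          · exact absurd ht (ne_of_lt (hint t ⟨h1', h2'⟩))
          · exact Or.inr h2'
        · exact Or.inl h1'.symm
      calc ({t : ℝ | q (a + t • v) = 0}).encard ≤ ({t₁, t₂} : Set ℝ).encard :=
            Set.encard_mono hsub
        _ ≤ ({t₂} : Set ℝ).encard + 1 := Set.encard_insert_le _ _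
        _ = 2 := by rw [Set.encard_singleton]; rfl
    · push_neg at hex
      have : {t : ℝ | q (a + t • v) = 0} = ∅ := by
        ext t
        simp only [mem_setOf_eq, mem_empty_iff_false, iff_false]
        intro h
        linarith [hex t, h.le]
      rw [this, Set.encard_empty]
      norm_num
  · -- tangency when a line meets Σ exactly once
    intro a v hv t₀ hZ
    have hq0 : q (a + t₀ • v) = 0 := by
      have : t₀ ∈ {t : ℝ | q (a + t • v) = 0} := by rw [hZ]; exact rfl
      exact this
    have hex : ∃ t : ℝ, q (a + t • v) ≤ 0 := ⟨t₀, le_of_eq hq0⟩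
    obtain ⟨t₁, t₂, h12, hz1, hz2, hbnds, hint⟩ := aux_interval hq hAll hbound a v hv hex
    have ht₁ : t₁ = t₀ := by
      have : t₁ ∈ {t : ℝ | q (a + t • v) = 0} := hz1
      rw [hZ] at this; exact this
    have ht₂ : t₂ = t₀ := by
      have : t₂ ∈ {t : ℝ | q (a + t • v) = 0} := hz2
      rw [hZ] at this; exact this
    have hglobalmin : ∀ t : ℝ, q (a + t₀ • v) ≤ q (a + t • v) := by
      intro t
      rw [hq0]
      by_contra hcon
      push_neg at hcon
      have hb := hbnds t (le_of_lt hcon)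
      rw [ht₁, ht₂] at hb
      have : t = t₀ := le_antisymm hb.2 hb.1
      rw [this, hq0] at hcon
      exact lt_irrefl 0 hcon
    have hlocmin : IsLocalMin (fun t : ℝ => q (a + t • v)) t₀ :=
      Filter.Eventually.of_forall hglobalmin
    exact hlocmin.hasDerivAt_eq_zero (aux_hasDerivAt_line hq a v t₀)
end
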